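/- arXiv:1803.02273 — 7 statements merged into one kernel-verified Lean document; each statement's English description precedes it below -/
import Mathlib

section
/- If K is an isolated non-saddle compact invariant set of a flow on a locally compact metric space, then its region of influence I(K) = A(K) ∪ R(K) is an open neighborhood of K. -/
open Set Filter Topology

variable {M : Type*}

/-- The positive semi-trajectory `γ⁺(x)`. -/
def posOrbit [TopologicalSpace M] (φ : Flow ℝ M) (x : M) : Set M :=
  {y | ∃ t : ℝ, 0 ≤ t ∧ φ t x = y}

/-- The negative semi-trajectory `γ⁻(x)`. -/
def negOrbit [TopologicalSpace M] (φ : Flow ℝ M) (x : M) : Set M :=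
  {y | ∃ t : ℝ, t ≤ 0 ∧ φ t x = y}

/-- The omega-limit set `ω(x) = ⋂_{t>0} closure (x·[t,∞))`. -/
def omegaLim [TopologicalSpace M] (φ : Flow ℝ M) (x : M) : Set M :=
  ⋂ t ∈ Set.Ioi (0:ℝ), closure {y | ∃ s : ℝ, t ≤ s ∧ φ s x = y}

/-- The negative omega-limit set `ω*(x) = ⋂_{t<0} closure (x·(-∞,t])`. -/
def alphaLim [TopologicalSpace M] (φ : Flow ℝ M) (x : M) : Set M :=
  ⋂ t ∈ Set.Iio (0:ℝ), closure {y | ∃ s : ℝ, s ≤ t ∧ φ s x = y}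

/-- `K` is invariant under the flow. -/
def FlowInvariant [TopologicalSpace M] (φ : Flow ℝ M) (K : Set M) : Prop :=
  ∀ x ∈ K, ∀ t : ℝ, φ t x ∈ K

/-- `K` is a compact invariant set which is the maximal invariant subset of some
compact neighborhood (an isolated invariant compactum). -/
def IsIsolatedInv [TopologicalSpace M] (φ : Flow ℝ M) (K : Set M) : Prop :=
  IsCompact K ∧ FlowInvariant φ K ∧
    ∃ N : Set M, IsCompact N ∧ K ⊆ interior N ∧
      ∀ x ∈ N, (∀ t : ℝ, φ t x ∈ N) → x ∈ K

/-- `K` is saddle: it admits a neighborhood `U` such that every neighborhood `V` of `K`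
contains a point whose positive and negative semi-trajectories both leave `U`. -/
def Saddle [TopologicalSpace M] (φ : Flow ℝ M) (K : Set M) : Prop :=
  ∃ U : Set M, K ⊆ interior U ∧ ∀ V : Set M, K ⊆ interior V →
    ∃ x ∈ V, ¬ posOrbit φ x ⊆ U ∧ ¬ negOrbit φ x ⊆ U

/-- `K` is non-saddle: every neighborhood `U` of `K` contains a neighborhood `V` of `K`
such that every point of `V` has `γ⁺(x) ⊆ U` or `γ⁻(x) ⊆ U`. -/
def NonSaddle [TopologicalSpace M] (φ : Flow ℝ M) (K : Set M) : Prop :=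
  ∀ U : Set M, K ⊆ interior U → ∃ V : Set M, K ⊆ interior V ∧ V ⊆ U ∧
    ∀ x ∈ V, posOrbit φ x ⊆ U ∨ negOrbit φ x ⊆ U

/-- The stable manifold (region of attraction) `A(K)`. -/
def Aset [TopologicalSpace M] (φ : Flow ℝ M) (K : Set M) : Set M :=
  {x | (omegaLim φ x).Nonempty ∧ omegaLim φ x ⊆ K}

/-- The unstable manifold (region of repulsion) `R(K)`. -/
def Rset [TopologicalSpace M] (φ : Flow ℝ M) (K : Set M) : Set M :=
  {x | (alphaLim φ x).Nonempty ∧ alphaLim φ x ⊆ K}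

/-- The region of influence `I(K) = A(K) ∪ R(K)`. -/
def Iset [TopologicalSpace M] (φ : Flow ℝ M) (K : Set M) : Set M :=
  Aset φ K ∪ Rset φ K

/-- `H(K) = A(K) ∩ R(K)`. -/
def Hset [TopologicalSpace M] (φ : Flow ℝ M) (K : Set M) : Set M :=
  Aset φ K ∩ Rset φ K

/-- The positive prolongational limit set `J⁺(x)`. -/
def Jplus [TopologicalSpace M] (φ : Flow ℝ M) (x : M) : Set M :=
  {y | ∃ (xs : ℕ → M) (ts : ℕ → ℝ), Tendsto xs atTop (𝓝 x) ∧
    Tendsto ts atTop atTop ∧ Tendsto (fun n => φ (ts n) (xs n)) atTop (𝓝 y)}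

/-- The negative prolongational limit set `J⁻(x)`. -/
def Jminus [TopologicalSpace M] (φ : Flow ℝ M) (x : M) : Set M :=
  {y | ∃ (xs : ℕ → M) (ts : ℕ → ℝ), Tendsto xs atTop (𝓝 x) ∧
    Tendsto ts atTop atBot ∧ Tendsto (fun n => φ (ts n) (xs n)) atTop (𝓝 y)}

/-- The two-sided prolongational limit set `J*(x)`. -/
def Jstar [TopologicalSpace M] (φ : Flow ℝ M) (x : M) : Set (M × M) :=
  {p | ∃ (xs : ℕ → M) (ts ss : ℕ → ℝ), Tendsto xs atTop (𝓝 x) ∧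
    Tendsto ts atTop atTop ∧ Tendsto ss atTop atBot ∧
    Tendsto (fun n => φ (ts n) (xs n)) atTop (𝓝 p.1) ∧
    Tendsto (fun n => φ (ss n) (xs n)) atTop (𝓝 p.2)}

/-- `x ∈ I(K)` is positively dissonant. -/
def PosDissonant [TopologicalSpace M] (φ : Flow ℝ M) (K : Set M) (x : M) : Prop :=
  x ∈ Iset φ K ∧ x ∉ Aset φ K ∧ (Jplus φ x ∩ K).Nonempty

/-- `x ∈ I(K)` is negatively dissonant. -/
def NegDissonant [TopologicalSpace M] (φ : Flow ℝ M) (K : Set M) (x : M) : Prop :=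
  x ∈ Iset φ K ∧ x ∉ Rset φ K ∧ (Jminus φ x ∩ K).Nonempty

/-- `x ∉ I(K)` is externally dissonant. -/
def ExtDissonant [TopologicalSpace M] (φ : Flow ℝ M) (K : Set M) (x : M) : Prop :=
  x ∉ Iset φ K ∧ (Jstar φ x ∩ K ×ˢ K).Nonempty

/-- `x` is a dissonant point of `K`. -/
def Dissonant [TopologicalSpace M] (φ : Flow ℝ M) (K : Set M) (x : M) : Prop :=
  PosDissonant φ K x ∨ NegDissonant φ K x ∨ ExtDissonant φ K x

/-- `N` is an isolating block for `K` with entrance set `Ni` and exit set `No`. -/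
structure IsolatingBlock [TopologicalSpace M] (φ : Flow ℝ M) (K N Ni No : Set M) : Prop where
  compact_N : IsCompact N
  nbhd : K ⊆ interior N
  maximal : ∀ x ∈ N, (∀ t : ℝ, φ t x ∈ N) → x ∈ K
  compact_Ni : IsCompact Ni
  compact_No : IsCompact No
  Ni_sub : Ni ⊆ frontier N
  No_sub : No ⊆ frontier N
  cover : frontier N = Ni ∪ No
  entrance : ∀ x ∈ Ni, ∃ ε > (0:ℝ), ∀ t ∈ Set.Ico (-ε) (0:ℝ), φ t x ∉ N
  exitSet : ∀ x ∈ No, ∃ δ > (0:ℝ), ∀ t ∈ Set.Ioc (0:ℝ) δ, φ t x ∉ N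
  tang_neg : ∀ x ∈ frontier N \ Ni, ∃ ε > (0:ℝ), ∀ t ∈ Set.Ico (-ε) (0:ℝ), φ t x ∈ interior N
  tang_pos : ∀ x ∈ frontier N \ No, ∃ δ > (0:ℝ), ∀ t ∈ Set.Ioc (0:ℝ) δ, φ t x ∈ interior N

/-- `p` is strongly influenced by `K`. -/
def StronglyInfluenced [TopologicalSpace M] (φ : Flow ℝ M) (K : Set M) (p : M) : Prop :=
  ∃ U ∈ 𝓝 p, ∀ V : Set M, K ⊆ interior V → ∃ T : ℝ, 0 ≤ T ∧ ∀ x ∈ U,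
    (∀ t : ℝ, T ≤ t → φ t x ∈ V) ∨ (∀ t : ℝ, t ≤ -T → φ t x ∈ V)

/-- `p` is strongly attracted by `K`. -/
def StronglyAttracted [TopologicalSpace M] (φ : Flow ℝ M) (K : Set M) (p : M) : Prop :=
  ∃ U ∈ 𝓝 p, ∀ V : Set M, K ⊆ interior V → ∃ T : ℝ, 0 ≤ T ∧ ∀ x ∈ U,
    ∀ t : ℝ, T ≤ t → φ t x ∈ V

/-- `p` is strongly repelled by `K`. -/
def StronglyRepelled [TopologicalSpace M] (φ : Flow ℝ M) (K : Set M) (p : M) : Prop :=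
  ∃ U ∈ 𝓝 p, ∀ V : Set M, K ⊆ interior V → ∃ T : ℝ, 0 ≤ T ∧ ∀ x ∈ U,
    ∀ t : ℝ, t ≤ -T → φ t x ∈ V

/-- `K` is (positively) stable. -/
def IsStable [TopologicalSpace M] (φ : Flow ℝ M) (K : Set M) : Prop :=
  ∀ U : Set M, K ⊆ interior U → ∃ V : Set M, K ⊆ interior V ∧ V ⊆ U ∧
    ∀ x ∈ V, ∀ t : ℝ, 0 ≤ t → φ t x ∈ V

/-- `K` is negatively stable. -/
def IsNegStable [TopologicalSpace M] (φ : Flow ℝ M) (K : Set M) : Prop :=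
  ∀ U : Set M, K ⊆ interior U → ∃ V : Set M, K ⊆ interior V ∧ V ⊆ U ∧
    ∀ x ∈ V, ∀ t : ℝ, t ≤ 0 → φ t x ∈ V

/-- `K` is an attractor: stable and attracting some neighborhood. -/
def IsAttractor [TopologicalSpace M] (φ : Flow ℝ M) (K : Set M) : Prop :=
  IsStable φ K ∧ ∃ W : Set M, K ⊆ interior W ∧ W ⊆ Aset φ K

/-- `K` is a repeller: negatively stable and repelling some neighborhood. -/
def IsRepeller [TopologicalSpace M] (φ : Flow ℝ M) (K : Set M) : Prop :=
  IsNegStable φ K ∧ ∃ W : Set M, K ⊆ interior W ∧ W ⊆ Rset φ K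

/-- If the forward orbit of `x` from some time on stays in a compact isolating
neighborhood `N`, then `x` is in the region of attraction of `K`. -/
lemma mem_Aset_of_tail_subset {M : Type*} [MetricSpace M]
    (φ : Flow ℝ M) (K N : Set M) (hN : IsCompact N)
    (hmax : ∀ x ∈ N, (∀ t : ℝ, φ t x ∈ N) → x ∈ K)
    {x : M} {T : ℝ} (hx : ∀ s : ℝ, T ≤ s → φ s x ∈ N) :
    x ∈ Aset φ K := by
  have hNc : IsClosed N := hN.isClosed
  set tail : ℝ → Set M := fun t => {y | ∃ s : ℝ, t ≤ s ∧ φ s x = y} with htaildef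
  have htailmono : ∀ {a b : ℝ}, a ≤ b → tail b ⊆ tail a := by
    rintro a b hab y ⟨s, hs, rfl⟩; exact ⟨s, hab.trans hs, rfl⟩
  have htailN : ∀ t : ℝ, T ≤ t → closure (tail t) ⊆ N := by
    intro t ht
    refine closure_minimal ?_ hNc
    rintro y ⟨s, hs, rfl⟩; exact hx s (ht.trans hs)
  have homega : omegaLim φ x = ⋂ t ∈ Set.Ioi (0:ℝ), closure (tail t) := rfl
  set S : ℕ → Set M := fun n => closure (tail (max T 1 + n)) with hSdef
  have hTle : ∀ n : ℕ, T ≤ max T 1 + n := fun n =>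
    le_add_of_le_of_nonneg (le_max_left _ _) (Nat.cast_nonneg n)
  have hScompact : ∀ n, IsCompact (S n) := fun n =>
    hN.of_isClosed_subset isClosed_closure (htailN _ (hTle n))
  have hSanti : ∀ n, S (n+1) ⊆ S n := by
    intro n
    exact closure_mono (htailmono (by push_cast; linarith))
  have hSne : ∀ n, (S n).Nonempty :=
    fun n => ⟨φ (max T 1 + n) x, subset_closure ⟨_, le_refl _, rfl⟩⟩
  have hne : (⋂ n, S n).Nonempty :=
    IsCompact.nonempty_iInter_of_sequence_nonempty_isCompact_isClosed S hSanti hSne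
      (hScompact 0) (fun n => isClosed_closure)
  have hsub : (⋂ n, S n) ⊆ omegaLim φ x := by
    intro y hy
    rw [homega]
    refine Set.mem_iInter₂.2 fun t _ => ?_
    obtain ⟨n, hn⟩ := exists_nat_ge (t - max T 1)
    have hsn : S n ⊆ closure (tail t) := closure_mono (htailmono (by linarith))
    exact hsn (Set.mem_iInter.1 hy n)
  have hmem_all : ∀ q ∈ omegaLim φ x, ∀ s : ℝ, q ∈ closure (tail s) := by
    intro q hq s
    rw [homega] at hq
    rcases lt_or_ge 0 s with h | h
    · exact Set.mem_iInter₂.1 hq s h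
    · exact closure_mono (htailmono (h.trans zero_le_one)) (Set.mem_iInter₂.1 hq 1 (Set.mem_Ioi.2 one_pos))
  have hinv : ∀ q ∈ omegaLim φ x, ∀ r : ℝ, φ r q ∈ omegaLim φ x := by
    intro q hq r
    rw [homega]
    refine Set.mem_iInter₂.2 fun t _ => ?_
    have h1 : q ∈ closure (tail (t - r)) := hmem_all q hq (t - r)
    have hcont : Continuous (fun y => φ r y) := φ.continuous continuous_const continuous_id
    have h2 : (fun y => φ r y) '' tail (t - r) ⊆ tail t := by
      rintro _ ⟨_, ⟨s, hs, rfl⟩, rfl⟩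
      exact ⟨r + s, by linarith, φ.map_add r s x⟩
    have h3 : φ r q ∈ closure ((fun y => φ r y) '' tail (t - r)) :=
      image_closure_subset_closure_image hcont ⟨q, h1, rfl⟩
    exact closure_mono h2 h3
  have hωN : omegaLim φ x ⊆ N := fun q hq =>
    htailN (max T 1) (le_max_left _ _) (hmem_all q hq _)
  have hωK : omegaLim φ x ⊆ K := fun q hq =>
    hmax q (hωN hq) (fun t => hωN (hinv q hq t))
  exact ⟨hne.mono hsub, hωK⟩

/-- If the backward orbit of `x` up to some time stays in a compact isolating
neighborhood `N`, then `x` is in the region of repulsion of `K`. -/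
lemma mem_Rset_of_tail_subset {M : Type*} [MetricSpace M]
    (φ : Flow ℝ M) (K N : Set M) (hN : IsCompact N)
    (hmax : ∀ x ∈ N, (∀ t : ℝ, φ t x ∈ N) → x ∈ K)
    {x : M} {T : ℝ} (hx : ∀ s : ℝ, s ≤ T → φ s x ∈ N) :
    x ∈ Rset φ K := by
  have hNc : IsClosed N := hN.isClosed
  set tail : ℝ → Set M := fun t => {y | ∃ s : ℝ, s ≤ t ∧ φ s x = y} with htaildef
  have htailmono : ∀ {a b : ℝ}, a ≤ b → tail a ⊆ tail b := by
    rintro a b hab y ⟨s, hs, rfl⟩; exact ⟨s, hs.trans hab, rfl⟩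
  have htailN : ∀ t : ℝ, t ≤ T → closure (tail t) ⊆ N := by
    intro t ht
    refine closure_minimal ?_ hNc
    rintro y ⟨s, hs, rfl⟩; exact hx s (hs.trans ht)
  have halpha : alphaLim φ x = ⋂ t ∈ Set.Iio (0:ℝ), closure (tail t) := rfl
  set S : ℕ → Set M := fun n => closure (tail (min T (-1) - n)) with hSdef
  have hTle : ∀ n : ℕ, min T (-1) - n ≤ T := fun n => by
    have h1 : min T (-1) ≤ T := min_le_left _ _
    have h2 : (0:ℝ) ≤ n := Nat.cast_nonneg n
    linarith
  have hScompact : ∀ n, IsCompact (S n) := fun n =>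
    hN.of_isClosed_subset isClosed_closure (htailN _ (hTle n))
  have hSanti : ∀ n, S (n+1) ⊆ S n := by
    intro n
    exact closure_mono (htailmono (by push_cast; linarith))
  have hSne : ∀ n, (S n).Nonempty :=
    fun n => ⟨φ (min T (-1) - n) x, subset_closure ⟨_, le_refl _, rfl⟩⟩
  have hne : (⋂ n, S n).Nonempty :=
    IsCompact.nonempty_iInter_of_sequence_nonempty_isCompact_isClosed S hSanti hSne
      (hScompact 0) (fun n => isClosed_closure)
  have hsub : (⋂ n, S n) ⊆ alphaLim φ x := by
    intro y hy
    rw [halpha]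
    refine Set.mem_iInter₂.2 fun t _ => ?_
    obtain ⟨n, hn⟩ := exists_nat_ge (min T (-1) - t)
    have hsn : S n ⊆ closure (tail t) := closure_mono (htailmono (by linarith))
    exact hsn (Set.mem_iInter.1 hy n)
  have hmem_all : ∀ q ∈ alphaLim φ x, ∀ s : ℝ, q ∈ closure (tail s) := by
    intro q hq s
    rw [halpha] at hq
    rcases lt_or_ge s 0 with h | h
    · exact Set.mem_iInter₂.1 hq s h
    · refine closure_mono (htailmono ?_) (Set.mem_iInter₂.1 hq (-1) (Set.mem_Iio.2 (by norm_num)))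
      linarith
  have hinv : ∀ q ∈ alphaLim φ x, ∀ r : ℝ, φ r q ∈ alphaLim φ x := by
    intro q hq r
    rw [halpha]
    refine Set.mem_iInter₂.2 fun t _ => ?_
    have h1 : q ∈ closure (tail (t - r)) := hmem_all q hq (t - r)
    have hcont : Continuous (fun y => φ r y) := φ.continuous continuous_const continuous_id
    have h2 : (fun y => φ r y) '' tail (t - r) ⊆ tail t := by
      rintro _ ⟨_, ⟨s, hs, rfl⟩, rfl⟩
      exact ⟨r + s, by linarith, φ.map_add r s x⟩
    have h3 : φ r q ∈ closure ((fun y => φ r y) '' tail (t - r)) :=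
      image_closure_subset_closure_image hcont ⟨q, h1, rfl⟩
    exact closure_mono h2 h3
  have hωN : alphaLim φ x ⊆ N := fun q hq =>
    htailN (min T (-1)) (min_le_left _ _) (hmem_all q hq _)
  have hωK : alphaLim φ x ⊆ K := fun q hq =>
    hmax q (hωN hq) (fun t => hωN (hinv q hq t))
  exact ⟨hne.mono hsub, hωK⟩

/-- the region of influence of an isolated non-saddle compactum is an
open neighborhood of `K`. -/
theorem stmt4 {M : Type*} [MetricSpace M] [LocallyCompactSpace M]
    (φ : Flow ℝ M) (K : Set M)
    (hIso : IsIsolatedInv φ K) (hNS : ¬ Saddle φ K) :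
    IsOpen (Iset φ K) ∧ K ⊆ Iset φ K := by
  obtain ⟨hK, hInv, N, hN, hKN, hmax⟩ := hIso
  have hKI : K ⊆ Iset φ K := by
    intro x hx
    exact Or.inl (mem_Aset_of_tail_subset φ K N hN hmax (T := 0)
      (fun s _ => interior_subset (hKN (hInv x hx s))))
  refine ⟨?_, hKI⟩
  rw [Saddle] at hNS
  push_neg at hNS
  obtain ⟨V, hKV, hV⟩ := hNS N hKN
  rw [isOpen_iff_forall_mem_open]
  intro p hp
  have hexT : ∃ T : ℝ, φ T p ∈ interior V := by
    rcases hp with hpA | hpR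
    · obtain ⟨⟨q, hq⟩, hqK⟩ := hpA
      have hqcl : q ∈ closure {y | ∃ s : ℝ, (1:ℝ) ≤ s ∧ φ s p = y} :=
        Set.mem_iInter₂.1 hq 1 (Set.mem_Ioi.2 one_pos)
      obtain ⟨y, hyV, s, _, rfl⟩ :=
        _root_.mem_closure_iff.1 hqcl (interior V) isOpen_interior (hKV (hqK hq))
      exact ⟨s, hyV⟩
    · obtain ⟨⟨q, hq⟩, hqK⟩ := hpR
      have hqcl : q ∈ closure {y | ∃ s : ℝ, s ≤ (-1:ℝ) ∧ φ s p = y} :=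
        Set.mem_iInter₂.1 hq (-1) (Set.mem_Iio.2 (by norm_num))
      obtain ⟨y, hyV, s, _, rfl⟩ :=
        _root_.mem_closure_iff.1 hqcl (interior V) isOpen_interior (hKV (hqK hq))
      exact ⟨s, hyV⟩
  obtain ⟨T, hT⟩ := hexT
  refine ⟨(fun y => φ T y) ⁻¹' (interior V), ?_, ?_, hT⟩
  · intro y hy
    have hyV : φ T y ∈ V := interior_subset hy
    have hshift : ∀ s : ℝ, φ s y = φ (s - T) (φ T y) := by
      intro s
      rw [← φ.map_add]
      congr 1
      ring
    rcases Classical.em (posOrbit φ (φ T y) ⊆ N) with hpos | hneg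
    · refine Or.inl (mem_Aset_of_tail_subset φ K N hN hmax (T := T) (fun s hs => ?_))
      rw [hshift s]
      exact hpos ⟨s - T, by linarith, rfl⟩
    · have hnegsub : negOrbit φ (φ T y) ⊆ N := hV (φ T y) hyV hneg
      refine Or.inr (mem_Rset_of_tail_subset φ K N hN hmax (T := T) (fun s hs => ?_))
      rw [hshift s]
      exact hnegsub ⟨s - T, by linarith, rfl⟩
  · exact isOpen_interior.preimage (φ.continuous continuous_const continuous_id)
end

section
/- Every isolated non-saddle compact invariant set K of a flow on a locally compact metric space admits, inside any given isolating block N, an isolating block N₀ with N₀ = N₀⁺ ∪ N₀⁻, i.e., every point of N₀ has either its full positive semi-trajectory or its full negative semi-trajectory contained in N₀. -/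
open Set Filter Topology

variable {M : Type*}

/-- Tube lemma: if the forward orbit of `x` stays in the closed set `N` (which has the
local structure of an isolating block in forward time), then for any `T ≥ 0`, nearby points
also stay in `N` on `[0, T]`. -/
lemma flow_tube {M : Type*} [MetricSpace M] (φ : Flow ℝ M) (N No : Set M)
    (hNc : IsClosed N) (hNoc : IsClosed No)
    (hexit : ∀ x ∈ No, ∃ δ > (0:ℝ), ∀ t ∈ Set.Ioc (0:ℝ) δ, φ t x ∉ N)
    (htang : ∀ x ∈ frontier N \ No, ∃ δ > (0:ℝ), ∀ t ∈ Set.Ioc (0:ℝ) δ, φ t x ∈ interior N)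
    (x : M) (hxp : ∀ t : ℝ, 0 ≤ t → φ t x ∈ N) (T : ℝ) :
    ∃ r > (0:ℝ), ∀ y, dist y x < r → y ∈ N → ∀ t ∈ Set.Icc (0:ℝ) T, φ t y ∈ N := by
  by_contra hcon
  push_neg at hcon
  -- extract a sequence of bad points
  have hseq : ∀ n : ℕ, ∃ y, dist y x < 1/(n+1) ∧ y ∈ N ∧ ∃ t ∈ Set.Icc (0:ℝ) T, φ t y ∉ N := by
    intro n
    obtain ⟨y, hy1, hy2, t, ht, htn⟩ := hcon (1/(n+1)) (by positivity)
    exact ⟨y, hy1, hy2, t, ht, htn⟩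
  choose y hy hyN t ht htn using hseq
  -- first exit times
  set S : ℕ → Set ℝ := fun n => {s | 0 ≤ s ∧ φ s (y n) ∉ N} with hS
  have hSne : ∀ n, (S n).Nonempty := fun n => ⟨t n, (ht n).1, htn n⟩
  have hSbdd : ∀ n, BddBelow (S n) := fun n => ⟨0, fun s hs => hs.1⟩
  set τ : ℕ → ℝ := fun n => sInf (S n) with hτ
  have hτ0 : ∀ n, 0 ≤ τ n := fun n => le_csInf (hSne n) (fun s hs => hs.1)
  have hτT : ∀ n, τ n ≤ T := fun n =>
    le_trans (csInf_le (hSbdd n) ⟨(ht n).1, htn n⟩) (ht n).2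
  have hbelow : ∀ n s, 0 ≤ s → s < τ n → φ s (y n) ∈ N := by
    intro n s hs0 hsτ
    by_contra hns
    exact absurd (csInf_le (hSbdd n) ⟨hs0, hns⟩) (not_le.mpr hsτ)
  have hcont : ∀ n, Continuous (fun s : ℝ => φ s (y n)) :=
    fun n => φ.continuous continuous_id continuous_const
  have hmemN : ∀ n, φ (τ n) (y n) ∈ N := by
    intro n
    rcases eq_or_lt_of_le (hτ0 n) with h0 | h0
    · rw [← h0, φ.map_zero_apply]; exact hyN n
    · have hne : (𝓝[Set.Ico (0:ℝ) (τ n)] (τ n)).NeBot := by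
        refine mem_closure_iff_nhdsWithin_neBot.mp ?_
        rw [closure_Ico (ne_of_lt h0)]
        exact ⟨le_of_lt h0, le_refl _⟩
      refine hNc.mem_of_tendsto
        (((hcont n).tendsto (τ n)).mono_left (nhdsWithin_le_nhds (s := Set.Ico (0:ℝ) (τ n)))) ?_
      filter_upwards [self_mem_nhdsWithin] with s hs
      exact hbelow n s hs.1 hs.2
  -- after τ n, there are exit times arbitrarily close
  have hnear : ∀ n, ∀ ε > (0:ℝ), ∃ s ∈ S n, s < τ n + ε := by
    intro n ε hε
    exact exists_lt_of_csInf_lt (hSne n) (by linarith)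
  have hfront : ∀ n, φ (τ n) (y n) ∈ frontier N := by
    intro n
    rw [hNc.frontier_eq]
    refine ⟨hmemN n, fun hint => ?_⟩
    obtain ⟨ε, hε, hball⟩ := Metric.eventually_nhds_iff_ball.mp
      (((hcont n).tendsto (τ n)).eventually (isOpen_interior.eventually_mem hint))
    obtain ⟨s, hsS, hslt⟩ := hnear n ε hε
    have hτs : τ n ≤ s := csInf_le (hSbdd n) hsS
    have : φ s (y n) ∈ interior N := by
      apply hball
      rw [Real.ball_eq_Ioo]
      constructor <;> [linarith; linarith]
    exact hsS.2 (interior_subset this)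
  have hNo : ∀ n, φ (τ n) (y n) ∈ No := by
    intro n
    by_contra hno
    obtain ⟨δ, hδ, hδin⟩ := htang _ ⟨hfront n, hno⟩
    obtain ⟨s, hsS, hslt⟩ := hnear n δ hδ
    have hτs : τ n ≤ s := csInf_le (hSbdd n) hsS
    rcases eq_or_lt_of_le hτs with h | h
    · exact hsS.2 (h ▸ hmemN n)
    · have : φ s (y n) ∈ interior N := by
        have := hδin (s - τ n) ⟨by linarith, by linarith⟩
        rwa [← φ.map_add, sub_add_cancel] at this
      exact hsS.2 (interior_subset this)
  -- compactness: pass to a convergent subsequence of exit times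
  obtain ⟨τ', hτ'mem, g, hg, hgt⟩ :=
    (isCompact_Icc (a := (0:ℝ)) (b := T)).tendsto_subseq
      (x := τ) (fun n => ⟨hτ0 n, hτT n⟩)
  have hyx : Tendsto y atTop (𝓝 x) := by
    rw [tendsto_iff_dist_tendsto_zero]
    refine squeeze_zero (fun n => dist_nonneg) (fun n => le_of_lt (hy n)) ?_
    exact tendsto_one_div_add_atTop_nhds_zero_nat
  have hlim : Tendsto (fun k => φ (τ (g k)) (y (g k))) atTop (𝓝 (φ τ' x)) := by
    have := (φ.cont'.tendsto (τ', x)).comp (hgt.prodMk_nhds (hyx.comp hg.tendsto_atTop))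
    exact this
  have hτ'No : φ τ' x ∈ No := hNoc.mem_of_tendsto hlim (Eventually.of_forall fun k => hNo (g k))
  obtain ⟨δ, hδ, hout⟩ := hexit _ hτ'No
  have : φ δ (φ τ' x) ∈ N := by
    rw [← φ.map_add]
    exact hxp _ (by have := hτ'mem.1; linarith)
  exact hout δ ⟨hδ, le_refl δ⟩ this


/-- Key lemma: a point of `N⁺ ∩ interior N` has an open neighborhood all of whose points
have forward or backward semiorbit in `N`. -/
lemma flow_key {M : Type*} [MetricSpace M] (φ : Flow ℝ M) (N No V K : Set M)
    (hN : IsCompact N) (hNoc : IsClosed No)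
    (hexit : ∀ z ∈ No, ∃ δ > (0:ℝ), ∀ t ∈ Set.Ioc (0:ℝ) δ, φ t z ∉ N)
    (htang : ∀ z ∈ frontier N \ No, ∃ δ > (0:ℝ), ∀ t ∈ Set.Ioc (0:ℝ) δ, φ t z ∈ interior N)
    (hmax : ∀ z ∈ N, (∀ t : ℝ, φ t z ∈ N) → z ∈ K)
    (hKV : K ⊆ interior V)
    (hV : ∀ y ∈ V, (∀ t : ℝ, 0 ≤ t → φ t y ∈ N) ∨ (∀ t : ℝ, t ≤ 0 → φ t y ∈ N))
    (x : M) (hx : x ∈ interior N) (hxp : ∀ t : ℝ, 0 ≤ t → φ t x ∈ N) :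
    ∃ W, IsOpen W ∧ x ∈ W ∧
      ∀ y ∈ W, (∀ t : ℝ, 0 ≤ t → φ t y ∈ N) ∨ (∀ t : ℝ, t ≤ 0 → φ t y ∈ N) := by
  -- Step 1: the forward orbit eventually enters `interior V`
  obtain ⟨T, hT0, hTV⟩ : ∃ T : ℝ, 0 ≤ T ∧ φ T x ∈ interior V := by
    have hz : ∀ n : ℕ, φ (n : ℝ) x ∈ N := fun n => hxp _ (Nat.cast_nonneg n)
    obtain ⟨p, hpN, g, hg, hgt⟩ := hN.tendsto_subseq hz
    have hpK : p ∈ K := by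
      refine hmax p hpN (fun r => ?_)
      have hlim : Tendsto (fun k => φ r (φ ((g k : ℕ) : ℝ) x)) atTop (𝓝 (φ r p)) :=
        ((φ.continuous continuous_const continuous_id).tendsto p).comp hgt
      refine hN.isClosed.mem_of_tendsto hlim ?_
      filter_upwards [eventually_ge_atTop ⌈-r⌉₊] with k hk
      rw [← φ.map_add]
      refine hxp _ ?_
      have h1 : ((⌈-r⌉₊ : ℕ) : ℝ) ≤ ((g k : ℕ) : ℝ) := by
        exact_mod_cast le_trans hk hg.le_apply
      have h2 : -r ≤ ((⌈-r⌉₊ : ℕ) : ℝ) := Nat.le_ceil _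
      linarith
    have : ∀ᶠ k in atTop, φ ((g k : ℕ) : ℝ) x ∈ interior V :=
      hgt.eventually (isOpen_interior.eventually_mem (hKV hpK))
    obtain ⟨k, hk⟩ := this.exists
    exact ⟨((g k : ℕ) : ℝ), Nat.cast_nonneg _, hk⟩
  -- Step 2: tube
  obtain ⟨r, hr, htube⟩ := flow_tube φ N No hN.isClosed hNoc hexit htang x hxp T
  -- Step 3: assemble the neighborhood
  refine ⟨Metric.ball x r ∩ interior N ∩ (fun y => φ T y) ⁻¹' interior V,
    ((Metric.isOpen_ball.inter isOpen_interior).inter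
      (isOpen_interior.preimage (φ.continuous continuous_const continuous_id))),
    ⟨⟨Metric.mem_ball_self hr, hx⟩, hTV⟩, ?_⟩
  rintro y ⟨⟨hyb, hyi⟩, hyV⟩
  have hy0T : ∀ t ∈ Set.Icc (0:ℝ) T, φ t y ∈ N :=
    htube y (Metric.mem_ball.mp hyb) (interior_subset hyi)
  rcases hV _ (interior_subset hyV) with h | h
  · left
    intro s hs
    rcases le_or_gt s T with hsT | hsT
    · exact hy0T s ⟨hs, hsT⟩
    · have := h (s - T) (by linarith)
      rwa [← φ.map_add, sub_add_cancel] at this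
  · right
    intro s hs
    have := h (s - T) (by linarith)
    rwa [← φ.map_add, sub_add_cancel] at this


/-- inside any isolating block `N` of an isolated non-saddle compactum `K`
there is an isolating block `N₀ = N₀⁺ ∪ N₀⁻`. -/
theorem stmt5 {M : Type*} [MetricSpace M] [LocallyCompactSpace M]
    (φ : Flow ℝ M) (K N Ni No : Set M)
    (hK : IsCompact K) (hInv : FlowInvariant φ K) (hNS : NonSaddle φ K)
    (hB : IsolatingBlock φ K N Ni No) :
    ∃ N₀ Ni₀ No₀ : Set M, N₀ ⊆ N ∧ IsolatingBlock φ K N₀ Ni₀ No₀ ∧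
      ∀ x ∈ N₀, (∀ t : ℝ, 0 ≤ t → φ t x ∈ N₀) ∨ (∀ t : ℝ, t ≤ 0 → φ t x ∈ N₀) := by

  obtain ⟨V, hKV, hVN, hdich⟩ := hNS (interior N) (by rw [interior_interior]; exact hB.nbhd)
  have hrev : ∀ (t : ℝ) (z : M), φ.reverse t z = φ (-t) z := fun _ _ => rfl
  have hV : ∀ y ∈ V, (∀ t : ℝ, 0 ≤ t → φ t y ∈ N) ∨ (∀ t : ℝ, t ≤ 0 → φ t y ∈ N) := by
    intro y hy
    refine (hdich y hy).imp (fun h t ht => ?_) (fun h t ht => ?_) <;>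
      exact interior_subset (h ⟨t, ht, rfl⟩)
  set Np : Set M := {z | z ∈ N ∧ ∀ t : ℝ, 0 ≤ t → φ t z ∈ N} with hNp
  set Nm : Set M := {z | z ∈ N ∧ ∀ t : ℝ, t ≤ 0 → φ t z ∈ N} with hNm
  set N₀ : Set M := Np ∪ Nm with hN₀def
  have hNc := hB.compact_N.isClosed
  have hNpc : IsClosed Np := by
    have h : Np = N ∩ ⋂ t ∈ Set.Ici (0:ℝ), (fun z => φ t z) ⁻¹' N := by
      ext z
      simp only [hNp, Set.mem_setOf_eq, Set.mem_inter_iff, Set.mem_iInter, Set.mem_preimage,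
        Set.mem_Ici]
      try tauto
    rw [h]
    exact hNc.inter (isClosed_biInter fun t _ =>
      hNc.preimage (φ.continuous continuous_const continuous_id))
  have hNmc : IsClosed Nm := by
    have h : Nm = N ∩ ⋂ t ∈ Set.Iic (0:ℝ), (fun z => φ t z) ⁻¹' N := by
      ext z
      simp only [hNm, Set.mem_setOf_eq, Set.mem_inter_iff, Set.mem_iInter, Set.mem_preimage,
        Set.mem_Iic]
      try tauto
    rw [h]
    exact hNc.inter (isClosed_biInter fun t _ =>
      hNc.preimage (φ.continuous continuous_const continuous_id))
  have hN₀c : IsClosed N₀ := hNpc.union hNmc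
  have hN₀N : N₀ ⊆ N := by rintro z (hz | hz) <;> exact hz.1
  have hkey : ∀ z, z ∈ N₀ → z ∈ interior N → z ∈ interior N₀ := by
    intro z hz hzi
    rcases hz with hz | hz
    · obtain ⟨W, hWo, hzW, hWp⟩ := flow_key φ N No V K hB.compact_N hB.compact_No.isClosed
        hB.exitSet hB.tang_pos hB.maximal hKV hV z hzi hz.2
      refine mem_interior.mpr ⟨W, ?_, hWo, hzW⟩
      rintro w hw
      rcases hWp w hw with h | h
      · exact Or.inl ⟨by simpa using h 0 le_rfl, h⟩
      · exact Or.inr ⟨by simpa using h 0 le_rfl, h⟩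
    · obtain ⟨W, hWo, hzW, hWp⟩ := flow_key φ.reverse N Ni V K hB.compact_N
        hB.compact_Ni.isClosed
        (fun w hw => by
          obtain ⟨ε, hε, h⟩ := hB.entrance w hw
          exact ⟨ε, hε, fun t ht => by
            rw [hrev]; exact h (-t) ⟨by linarith [ht.2], by linarith [ht.1]⟩⟩)
        (fun w hw => by
          obtain ⟨ε, hε, h⟩ := hB.tang_neg w hw
          exact ⟨ε, hε, fun t ht => by
            rw [hrev]; exact h (-t) ⟨by linarith [ht.2], by linarith [ht.1]⟩⟩)
        (fun w hwN h => hB.maximal w hwN (fun t => by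
          have := h (-t); rwa [hrev, neg_neg] at this))
        hKV
        (fun y hy => (hV y hy).symm.imp
          (fun h t ht => by rw [hrev]; exact h (-t) (by linarith))
          (fun h t ht => by rw [hrev]; exact h (-t) (by linarith)))
        z hzi (fun t ht => by rw [hrev]; exact hz.2 (-t) (by linarith))
      refine mem_interior.mpr ⟨W, ?_, hWo, hzW⟩
      rintro w hw
      rcases hWp w hw with h | h
      · refine Or.inr ⟨by simpa using h 0 le_rfl, fun t ht => ?_⟩
        have := h (-t) (by linarith)
        rwa [hrev, neg_neg] at this
      · refine Or.inl ⟨by simpa using h 0 le_rfl, fun t ht => ?_⟩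
        have := h (-t) (by linarith)
        rwa [hrev, neg_neg] at this
  have hKN : K ⊆ N := hB.nbhd.trans interior_subset
  have hKN₀ : K ⊆ N₀ := fun z hz => Or.inl ⟨hKN hz, fun t _ => hKN (hInv z hz t)⟩
  have hKint : K ⊆ interior N₀ := fun z hz => hkey z (hKN₀ hz) (hB.nbhd hz)
  have hfr : frontier N₀ ⊆ frontier N := by
    intro z hz
    rw [hN₀c.frontier_eq] at hz
    rw [hNc.frontier_eq]
    exact ⟨hN₀N hz.1, fun hi => hz.2 (hkey z hz.1 hi)⟩
  have hfrN₀ : frontier N₀ ⊆ N₀ := by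
    intro z hz; rw [hN₀c.frontier_eq] at hz; exact hz.1
  have hNpfw : ∀ z ∈ Np, ∀ t : ℝ, 0 ≤ t → φ t z ∈ Np := by
    intro z hz t ht
    exact ⟨hz.2 t ht, fun s hs => by rw [← φ.map_add]; exact hz.2 (s + t) (by linarith)⟩
  have hNmbw : ∀ z ∈ Nm, ∀ t : ℝ, t ≤ 0 → φ t z ∈ Nm := by
    intro z hz t ht
    exact ⟨hz.2 t ht, fun s hs => by rw [← φ.map_add]; exact hz.2 (s + t) (by linarith)⟩
  refine ⟨N₀, Ni ∩ frontier N₀, No ∩ frontier N₀, hN₀N, ?_, ?_⟩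
  · refine ⟨hB.compact_N.of_isClosed_subset hN₀c hN₀N, hKint,
      (fun z hz h => hB.maximal z (hN₀N hz) (fun t => hN₀N (h t))),
      hB.compact_Ni.inter_right isClosed_frontier,
      hB.compact_No.inter_right isClosed_frontier,
      Set.inter_subset_right, Set.inter_subset_right, ?_, ?_, ?_, ?_, ?_⟩
    · -- cover
      apply Set.Subset.antisymm
      · intro z hz
        have hzf := hfr hz
        rw [hB.cover] at hzf
        rcases hzf with h | h
        exacts [Or.inl ⟨h, hz⟩, Or.inr ⟨h, hz⟩]
      · rintro z (⟨_, h⟩ | ⟨_, h⟩) <;> exact h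
    · -- entrance
      intro z hz
      obtain ⟨ε, hε, h⟩ := hB.entrance z hz.1
      exact ⟨ε, hε, fun t ht hmem => h t ht (hN₀N hmem)⟩
    · -- exit
      intro z hz
      obtain ⟨δ, hδ, h⟩ := hB.exitSet z hz.1
      exact ⟨δ, hδ, fun t ht hmem => h t ht (hN₀N hmem)⟩
    · -- tang_neg
      rintro z ⟨hzf, hzn⟩
      have hzfr : z ∈ frontier N := hfr hzf
      have hzNi : z ∉ Ni := fun h => hzn ⟨h, hzf⟩
      obtain ⟨ε, hε, hεin⟩ := hB.tang_neg z ⟨hzfr, hzNi⟩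
      refine ⟨ε, hε, fun t ht => ?_⟩
      have hint : φ t z ∈ interior N := hεin t ht
      have hmem : φ t z ∈ N₀ := by
        rcases hfrN₀ hzf with h | h
        · refine Or.inl ⟨interior_subset hint, fun s hs => ?_⟩
          rcases le_or_gt 0 (s + t) with h0 | h0
          · rw [← φ.map_add]; exact h.2 (s + t) h0
          · rw [← φ.map_add]
            exact interior_subset (hεin (s + t) ⟨by linarith [ht.1], h0⟩)
        · exact Or.inr (hNmbw z h t (le_of_lt ht.2))
      exact hkey _ hmem hint
    · -- tang_pos
      rintro z ⟨hzf, hzn⟩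
      have hzfr : z ∈ frontier N := hfr hzf
      have hzNo : z ∉ No := fun h => hzn ⟨h, hzf⟩
      obtain ⟨δ, hδ, hδin⟩ := hB.tang_pos z ⟨hzfr, hzNo⟩
      refine ⟨δ, hδ, fun t ht => ?_⟩
      have hint : φ t z ∈ interior N := hδin t ht
      have hmem : φ t z ∈ N₀ := by
        rcases hfrN₀ hzf with h | h
        · exact Or.inl (hNpfw z h t (le_of_lt ht.1))
        · refine Or.inr ⟨interior_subset hint, fun s hs => ?_⟩
          rcases le_or_gt (s + t) 0 with h0 | h0
          · rw [← φ.map_add]; exact h.2 (s + t) h0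
          · rw [← φ.map_add]
            exact interior_subset (hδin (s + t) ⟨h0, by linarith [ht.2]⟩)
      exact hkey _ hmem hint
  · rintro z (hz | hz)
    · exact Or.inl (fun t ht => Or.inl (hNpfw z hz t ht))
    · exact Or.inr (fun t ht => Or.inr (hNmbw z hz t ht))
end

section
/- Let K be an isolated non-saddle compact invariant set. If x ∈ I(K), then x is strongly influenced by K; moreover every point of A(K)∖K is strongly attracted by K and every point of R(K)∖K is strongly repelled by K. -/
open Set Filter Topology

variable {M : Type*}

namespace Stmt6Aux

variable {M : Type*} [MetricSpace M]

/-- Isolation lemma: for every open `O ⊇ K`, points of the isolating neighborhood `N`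
whose orbit stays in `N` for all `|t| ≤ S` lie in `O`, for some finite `S ≥ 0`. -/
lemma iso_lemma (φ : Flow ℝ M) {K N O : Set M} (hN : IsCompact N)
    (hmax : ∀ x ∈ N, (∀ t : ℝ, φ t x ∈ N) → x ∈ K)
    (hO : IsOpen O) (hKO : K ⊆ O) :
    ∃ S : ℝ, 0 ≤ S ∧ ∀ z ∈ N, (∀ t : ℝ, |t| ≤ S → φ t z ∈ N) → z ∈ O := by
  set C : ℕ → Set M := fun n => ⋂ (t : ℝ) (_ : |t| ≤ (n : ℝ)), (fun y => φ t y) ⁻¹' N with hC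
  have hCmem : ∀ {n : ℕ} {x : M}, x ∈ C n ↔ ∀ t : ℝ, |t| ≤ (n : ℝ) → φ t x ∈ N := by
    intro n x; simp only [hC, Set.mem_iInter, Set.mem_preimage]
  have hCclosed : ∀ n, IsClosed (C n) := fun n =>
    isClosed_iInter fun t => isClosed_iInter fun _ =>
      hN.isClosed.preimage (φ.continuous continuous_const continuous_id)
  have hdir : Directed (· ⊇ ·) C := by
    intro m n
    refine ⟨max m n, fun x hx => ?_, fun x hx => ?_⟩ <;>
    · rw [hCmem] at hx ⊢
      intro t ht
      refine hx t (ht.trans ?_)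
      simp [Nat.cast_max, le_max_left, le_max_right]
  have hempty : (N ∩ Oᶜ) ∩ ⋂ n, C n = ∅ := by
    rw [Set.eq_empty_iff_forall_notMem]
    rintro x ⟨⟨hxN, hxO⟩, hCx⟩
    refine hxO (hKO (hmax x hxN fun t => ?_))
    exact hCmem.mp (Set.mem_iInter.mp hCx ⌈|t|⌉₊) t (Nat.le_ceil _)
  obtain ⟨n, hn⟩ := (hN.inter_right (isClosed_compl_iff.mpr hO)).elim_directed_family_closed
    C hCclosed hempty hdir
  refine ⟨n, Nat.cast_nonneg n, fun z hz hzN => ?_⟩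
  by_contra hzO
  have hmem : z ∈ (N ∩ Oᶜ) ∩ C n := ⟨⟨hz, hzO⟩, hCmem.mpr fun t ht => hzN t ht⟩
  rw [hn] at hmem
  exact hmem

lemma attracted (φ : Flow ℝ M) {K : Set M}
    (hIso : IsIsolatedInv φ K) (hNS : NonSaddle φ K) :
    ∀ p ∈ Aset φ K \ K, StronglyAttracted φ K p := by
  obtain ⟨-, hInv, N, hNcomp, hKN, hmax⟩ := hIso
  obtain ⟨V₀, hKV₀, hV₀N, hdich⟩ := hNS N hKN
  rintro p ⟨⟨⟨y, hy⟩, hωK⟩, hpK⟩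
  have hyV₀ : y ∈ interior V₀ := hKV₀ (hωK hy)
  -- Step 1: find `T₁ ≥ 0` with `φ T₁ p ∈ interior V₀` and forward orbit in `N` from `T₁`.
  have step1 : ∃ T₁ : ℝ, 0 ≤ T₁ ∧ φ T₁ p ∈ interior V₀ ∧ ∀ t : ℝ, T₁ ≤ t → φ t p ∈ N := by
    by_contra hcon
    push_neg at hcon
    have hall : ∀ t : ℝ, φ t p ∈ N := by
      intro t
      have ht₀pos : (0 : ℝ) < max t 0 + 1 := by
        have := le_max_right t 0; linarith
      have hyc : y ∈ closure {z | ∃ s : ℝ, max t 0 + 1 ≤ s ∧ φ s p = z} :=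
        Set.mem_iInter₂.mp hy (max t 0 + 1) (Set.mem_Ioi.mpr ht₀pos)
      obtain ⟨z, hzV, s, hs, hzeq⟩ :=
        mem_closure_iff.mp hyc (interior V₀) isOpen_interior hyV₀
      subst hzeq
      have hs0 : (0 : ℝ) ≤ s := le_trans ht₀pos.le hs
      rcases hdich (φ s p) (interior_subset hzV) with hpos | hneg
      · exfalso
        obtain ⟨u, hsu, huN⟩ := hcon s hs0 hzV
        apply huN
        have heq : φ u p = φ (u - s) (φ s p) := by
          rw [← φ.map_add]; congr 1; ring
        rw [heq]
        exact hpos ⟨u - s, by linarith, rfl⟩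
      · have heq : φ t p = φ (t - s) (φ s p) := by
          rw [← φ.map_add]; congr 1; ring
        rw [heq]
        have := le_max_left t 0
        exact hneg ⟨t - s, by linarith, rfl⟩
    have hpN : p ∈ N := by
      have := hall 0; rwa [φ.map_zero_apply] at this
    exact hpK (hmax p hpN hall)
  obtain ⟨T₁, hT₁0, hqV, hqN⟩ := step1
  -- `q = φ T₁ p` is not in `K`, hence its orbit leaves `N` at some time `t₀ ≤ 0`.
  have hqK : φ T₁ p ∉ K := by
    intro h
    apply hpK
    have h2 := hInv _ h (-T₁)
    rw [← φ.map_add] at h2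
    have heq : -T₁ + T₁ = 0 := by ring
    rwa [heq, φ.map_zero_apply] at h2
  obtain ⟨t₀, ht₀⟩ : ∃ t₀ : ℝ, φ t₀ (φ T₁ p) ∉ N := by
    by_contra h
    push_neg at h
    exact hqK (hmax _ (hqN T₁ le_rfl) h)
  have ht₀neg : t₀ ≤ 0 := by
    by_contra h
    push_neg at h
    apply ht₀
    rw [← φ.map_add]
    exact hqN _ (by linarith)
  -- The neighborhood `U` of `p`.
  refine ⟨(fun x => φ T₁ x) ⁻¹' (interior V₀ ∩ (fun y => φ t₀ y) ⁻¹' Nᶜ), ?_, ?_⟩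
  · refine (IsOpen.preimage (φ.continuous continuous_const continuous_id) ?_).mem_nhds
      ⟨hqV, ht₀⟩
    exact isOpen_interior.inter
      (hNcomp.isClosed.isOpen_compl.preimage (φ.continuous continuous_const continuous_id))
  intro V hKV
  obtain ⟨S, hS0, hS⟩ := iso_lemma φ hNcomp hmax isOpen_interior hKV
  have hUN : ∀ x, φ T₁ x ∈ interior V₀ → φ t₀ (φ T₁ x) ∉ N →
      ∀ t : ℝ, T₁ ≤ t → φ t x ∈ N := by
    intro x hx1 hx2 t ht
    rcases hdich (φ T₁ x) (interior_subset hx1) with hpos | hneg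
    · have heq : φ t x = φ (t - T₁) (φ T₁ x) := by
        rw [← φ.map_add]; congr 1; ring
      rw [heq]
      exact hpos ⟨t - T₁, by linarith, rfl⟩
    · exact absurd (hneg ⟨t₀, ht₀neg, rfl⟩) hx2
  refine ⟨T₁ + S, by linarith, fun x hx t ht => ?_⟩
  have hzN : φ t x ∈ N := hUN x hx.1 hx.2 t (by linarith)
  refine interior_subset (hS _ hzN fun s hs => ?_)
  have habs := abs_le.mp hs
  rw [← φ.map_add]
  exact hUN x hx.1 hx.2 (s + t) (by linarith [habs.1])

lemma repelled (φ : Flow ℝ M) {K : Set M}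
    (hIso : IsIsolatedInv φ K) (hNS : NonSaddle φ K) :
    ∀ p ∈ Rset φ K \ K, StronglyRepelled φ K p := by
  obtain ⟨-, hInv, N, hNcomp, hKN, hmax⟩ := hIso
  obtain ⟨V₀, hKV₀, hV₀N, hdich⟩ := hNS N hKN
  rintro p ⟨⟨⟨y, hy⟩, hαK⟩, hpK⟩
  have hyV₀ : y ∈ interior V₀ := hKV₀ (hαK hy)
  have step1 : ∃ T₁ : ℝ, T₁ ≤ 0 ∧ φ T₁ p ∈ interior V₀ ∧ ∀ t : ℝ, t ≤ T₁ → φ t p ∈ N := by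
    by_contra hcon
    push_neg at hcon
    have hall : ∀ t : ℝ, φ t p ∈ N := by
      intro t
      have ht₀neg : min t 0 - 1 < (0 : ℝ) := by
        have := min_le_right t 0; linarith
      have hyc : y ∈ closure {z | ∃ s : ℝ, s ≤ min t 0 - 1 ∧ φ s p = z} :=
        Set.mem_iInter₂.mp hy (min t 0 - 1) (Set.mem_Iio.mpr ht₀neg)
      obtain ⟨z, hzV, s, hs, hzeq⟩ :=
        mem_closure_iff.mp hyc (interior V₀) isOpen_interior hyV₀
      subst hzeq
      have hs0 : s ≤ (0 : ℝ) := le_trans hs ht₀neg.le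
      rcases hdich (φ s p) (interior_subset hzV) with hpos | hneg
      · have heq : φ t p = φ (t - s) (φ s p) := by
          rw [← φ.map_add]; congr 1; ring
        rw [heq]
        have := min_le_left t 0
        exact hpos ⟨t - s, by linarith, rfl⟩
      · exfalso
        obtain ⟨u, hsu, huN⟩ := hcon s hs0 hzV
        apply huN
        have heq : φ u p = φ (u - s) (φ s p) := by
          rw [← φ.map_add]; congr 1; ring
        rw [heq]
        exact hneg ⟨u - s, by linarith, rfl⟩
    have hpN : p ∈ N := by
      have := hall 0; rwa [φ.map_zero_apply] at this
    exact hpK (hmax p hpN hall)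
  obtain ⟨T₁, hT₁0, hqV, hqN⟩ := step1
  have hqK : φ T₁ p ∉ K := by
    intro h
    apply hpK
    have h2 := hInv _ h (-T₁)
    rw [← φ.map_add] at h2
    have heq : -T₁ + T₁ = 0 := by ring
    rwa [heq, φ.map_zero_apply] at h2
  obtain ⟨t₀, ht₀⟩ : ∃ t₀ : ℝ, φ t₀ (φ T₁ p) ∉ N := by
    by_contra h
    push_neg at h
    exact hqK (hmax _ (hqN T₁ le_rfl) h)
  have ht₀pos : 0 ≤ t₀ := by
    by_contra h
    push_neg at h
    apply ht₀
    rw [← φ.map_add]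
    exact hqN _ (by linarith)
  refine ⟨(fun x => φ T₁ x) ⁻¹' (interior V₀ ∩ (fun y => φ t₀ y) ⁻¹' Nᶜ), ?_, ?_⟩
  · refine (IsOpen.preimage (φ.continuous continuous_const continuous_id) ?_).mem_nhds
      ⟨hqV, ht₀⟩
    exact isOpen_interior.inter
      (hNcomp.isClosed.isOpen_compl.preimage (φ.continuous continuous_const continuous_id))
  intro V hKV
  obtain ⟨S, hS0, hS⟩ := iso_lemma φ hNcomp hmax isOpen_interior hKV
  have hUN : ∀ x, φ T₁ x ∈ interior V₀ → φ t₀ (φ T₁ x) ∉ N →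
      ∀ t : ℝ, t ≤ T₁ → φ t x ∈ N := by
    intro x hx1 hx2 t ht
    rcases hdich (φ T₁ x) (interior_subset hx1) with hpos | hneg
    · exact absurd (hpos ⟨t₀, ht₀pos, rfl⟩) hx2
    · have heq : φ t x = φ (t - T₁) (φ T₁ x) := by
        rw [← φ.map_add]; congr 1; ring
      rw [heq]
      exact hneg ⟨t - T₁, by linarith, rfl⟩
  refine ⟨S - T₁, by linarith, fun x hx t ht => ?_⟩
  have hzN : φ t x ∈ N := hUN x hx.1 hx.2 t (by linarith)
  refine interior_subset (hS _ hzN fun s hs => ?_)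
  have habs := abs_le.mp hs
  rw [← φ.map_add]
  exact hUN x hx.1 hx.2 (s + t) (by linarith [habs.2])

lemma influenced_of_mem_K (φ : Flow ℝ M) {K : Set M}
    (hIso : IsIsolatedInv φ K) (hNS : NonSaddle φ K) :
    ∀ p ∈ K, StronglyInfluenced φ K p := by
  obtain ⟨-, -, N, hNcomp, hKN, hmax⟩ := hIso
  obtain ⟨V₀, hKV₀, hV₀N, hdich⟩ := hNS N hKN
  intro p hp
  refine ⟨interior V₀, isOpen_interior.mem_nhds (hKV₀ hp), fun V hKV => ?_⟩
  obtain ⟨S, hS0, hS⟩ := iso_lemma φ hNcomp hmax isOpen_interior hKV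
  refine ⟨S, hS0, fun x hx => ?_⟩
  rcases hdich x (interior_subset hx) with hpos | hneg
  · left
    intro t ht
    have hxt : φ t x ∈ N := hpos ⟨t, by linarith, rfl⟩
    refine interior_subset (hS _ hxt fun s hs => ?_)
    have habs := abs_le.mp hs
    rw [← φ.map_add]
    exact hpos ⟨s + t, by linarith [habs.1], rfl⟩
  · right
    intro t ht
    have hxt : φ t x ∈ N := hneg ⟨t, by linarith, rfl⟩
    refine interior_subset (hS _ hxt fun s hs => ?_)
    have habs := abs_le.mp hs
    rw [← φ.map_add]
    exact hneg ⟨s + t, by linarith [habs.2], rfl⟩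

end Stmt6Aux

/-- for an isolated non-saddle compactum, every point of `I(K)` is strongly
influenced by `K`, every point of `A(K)∖K` is strongly attracted and every point of
`R(K)∖K` is strongly repelled. -/
theorem stmt6 {M : Type*} [MetricSpace M] [LocallyCompactSpace M]
    (φ : Flow ℝ M) (K : Set M)
    (hIso : IsIsolatedInv φ K) (hNS : NonSaddle φ K) :
    (∀ x ∈ Iset φ K, StronglyInfluenced φ K x) ∧
    (∀ x ∈ Aset φ K \ K, StronglyAttracted φ K x) ∧
    (∀ x ∈ Rset φ K \ K, StronglyRepelled φ K x) := by
  have hA := Stmt6Aux.attracted φ hIso hNS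
  have hR := Stmt6Aux.repelled φ hIso hNS
  have hK := Stmt6Aux.influenced_of_mem_K φ hIso hNS
  refine ⟨?_, hA, hR⟩
  intro x hx
  by_cases hxK : x ∈ K
  · exact hK x hxK
  · rcases hx with hxA | hxR
    · obtain ⟨U, hU, h⟩ := hA x ⟨hxA, hxK⟩
      exact ⟨U, hU, fun V hV => (h V hV).imp fun T hT =>
        ⟨hT.1, fun z hz => Or.inl (hT.2 z hz)⟩⟩
    · obtain ⟨U, hU, h⟩ := hR x ⟨hxR, hxK⟩
      exact ⟨U, hU, fun V hV => (h V hV).imp fun T hT =>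
        ⟨hT.1, fun z hz => Or.inr (hT.2 z hz)⟩⟩
end

section
/- An isolated invariant compact set K is non-saddle if and only if every point of K is strongly influenced by K, if and only if K has a neighborhood U all of whose points are strongly influenced by K. -/
open Set Filter Topology

variable {M : Type*}

private lemma key_lemma {X : Type*} [MetricSpace X]
    (φ : Flow ℝ X) {K N W : Set X} (hN : IsCompact N)
    (hmax : ∀ x ∈ N, (∀ t : ℝ, φ t x ∈ N) → x ∈ K)
    (hKW : K ⊆ interior W)
    (x : ℕ → X) (hx : ∀ n, ∀ t : ℝ, 0 ≤ t → φ t (x n) ∈ N)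
    (s : ℕ → ℝ) (hs : ∀ n : ℕ, (n : ℝ) ≤ s n)
    (hout : ∀ n, φ (s n) (x n) ∉ interior W) : False := by
  set z : ℕ → X := fun n => φ (s n) (x n) with hz
  have hzC : ∀ n, z n ∈ N \ interior W := fun n =>
    ⟨hx n (s n) (le_trans (Nat.cast_nonneg n) (hs n)), hout n⟩
  obtain ⟨a, haC, g, hg, hconv⟩ := (hN.diff isOpen_interior).tendsto_subseq hzC
  have horb : ∀ t : ℝ, φ t a ∈ N := by
    intro t
    have hcont : Continuous fun y => φ t y := φ.continuous_toFun t
    have htend : Tendsto (fun k => φ t (z (g k))) atTop (𝓝 (φ t a)) :=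
      (hcont.tendsto a).comp hconv
    refine hN.isClosed.mem_of_tendsto htend ?_
    filter_upwards [eventually_ge_atTop ⌈-t⌉₊] with k hk
    have hge : ((⌈-t⌉₊ : ℕ) : ℝ) ≤ (g k : ℝ) := by
      exact_mod_cast le_trans hk (hg.id_le k)
    have hle : (-t : ℝ) ≤ ((⌈-t⌉₊ : ℕ) : ℝ) := Nat.le_ceil _
    have h1 : (0:ℝ) ≤ t + s (g k) := by
      have := hs (g k); linarith
    have heq : φ t (z (g k)) = φ (t + s (g k)) (x (g k)) := by
      rw [hz]; rw [← φ.map_add]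
    rw [heq]; exact hx (g k) _ h1
  exact haC.2 (hKW (hmax a haC.1 horb))

private lemma tube_lemma' {X : Type*} [MetricSpace X] (φ : Flow ℝ X) {K U : Set X}
    (hK : IsCompact K) (hInv : FlowInvariant φ K) (hKU : K ⊆ interior U) (T : ℝ) :
    ∃ O : Set X, IsOpen O ∧ K ⊆ O ∧ ∀ x ∈ O, ∀ t : ℝ, -T ≤ t → t ≤ T → φ t x ∈ U := by
  have hsub : Set.Icc (-T) T ×ˢ K ⊆ (Function.uncurry φ) ⁻¹' interior U := by
    rintro ⟨t, y⟩ ⟨-, hy⟩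
    exact hKU (hInv y hy t)
  obtain ⟨u, v, hu, hv, hIu, hKv, huv⟩ :=
    generalized_tube_lemma isCompact_Icc hK (isOpen_interior.preimage φ.cont') hsub
  exact ⟨v, hv, hKv, fun x hx t h1 h2 =>
    interior_subset (huv (Set.mk_mem_prod (hIu ⟨h1, h2⟩) hx))⟩

/-- an isolated invariant compactum is non-saddle iff all its points are
strongly influenced by it, iff some neighborhood consists of strongly influenced points. -/
theorem stmt7 {M : Type*} [MetricSpace M] [LocallyCompactSpace M]
    (φ : Flow ℝ M) (K : Set M) (hIso : IsIsolatedInv φ K) :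
    (¬ Saddle φ K ↔ ∀ p ∈ K, StronglyInfluenced φ K p) ∧
    (¬ Saddle φ K ↔ ∃ U : Set M, K ⊆ interior U ∧
      ∀ p ∈ U, StronglyInfluenced φ K p) := by
  obtain ⟨hKc, hKinv, N, hNc, hKN, hmax⟩ := hIso
  -- hard direction
  have hard : ¬ Saddle φ K → ∀ p ∈ K, StronglyInfluenced φ K p := by
    intro hns p hp
    have hV : ∃ V : Set M, K ⊆ interior V ∧
        ∀ x ∈ V, posOrbit φ x ⊆ N ∨ negOrbit φ x ⊆ N := by
      by_contra h
      push_neg at h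
      refine hns ⟨N, hKN, fun V hKV => ?_⟩
      obtain ⟨x, hxV, h1, h2⟩ := h V hKV
      exact ⟨x, hxV, h1, h2⟩
    obtain ⟨V, hKV, hVdich⟩ := hV
    refine ⟨V, mem_nhds_iff.mpr ⟨interior V, interior_subset, isOpen_interior, hKV hp⟩, ?_⟩
    intro W hKW
    suffices h' : ∃ T : ℝ, 0 ≤ T ∧ ∀ x ∈ V,
        (∀ t : ℝ, T ≤ t → φ t x ∈ W ∩ N) ∨ (∀ t : ℝ, t ≤ -T → φ t x ∈ W ∩ N) by
      obtain ⟨T, hT0, hT⟩ := h'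
      exact ⟨T, hT0, fun x hx => (hT x hx).imp
        (fun h t ht => (h t ht).1) (fun h t ht => (h t ht).1)⟩
    have hKWN : K ⊆ interior (W ∩ N) := by
      rw [interior_inter]; exact subset_inter hKW hKN
    by_contra hcon
    push_neg at hcon
    set Pp : ℝ → Prop := fun T => ∃ y : M, (∀ t : ℝ, 0 ≤ t → φ t y ∈ N) ∧
      ∃ t : ℝ, T ≤ t ∧ φ t y ∉ W ∩ N with hPp
    set Qp : ℝ → Prop := fun T => ∃ y : M, (∀ t : ℝ, t ≤ 0 → φ t y ∈ N) ∧
      ∃ t : ℝ, t ≤ -T ∧ φ t y ∉ W ∩ N with hQp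
    have hPQ : ∀ T : ℝ, 0 ≤ T → Pp T ∨ Qp T := by
      intro T hT
      obtain ⟨x, hxV, ⟨t1, ht1, ho1⟩, ⟨t2, ht2, ho2⟩⟩ := hcon T hT
      rcases hVdich x hxV with hpos | hneg
      · exact Or.inl ⟨x, fun t ht => hpos ⟨t, ht, rfl⟩, t1, ht1, ho1⟩
      · exact Or.inr ⟨x, fun t ht => hneg ⟨t, ht, rfl⟩, t2, ht2, ho2⟩
    have hmonoP : ∀ {T T' : ℝ}, T' ≤ T → Pp T → Pp T' := by
      rintro T T' hle ⟨y, h1, t, ht, ho⟩; exact ⟨y, h1, t, le_trans hle ht, ho⟩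
    have hmonoQ : ∀ {T T' : ℝ}, T' ≤ T → Qp T → Qp T' := by
      rintro T T' hle ⟨y, h1, t, ht, ho⟩
      exact ⟨y, h1, t, le_trans ht (neg_le_neg hle), ho⟩
    have hcases : (∀ T : ℝ, Pp T) ∨ (∀ T : ℝ, Qp T) := by
      by_contra hc
      push_neg at hc
      obtain ⟨⟨T1, hT1⟩, ⟨T2, hT2⟩⟩ := hc
      rcases hPQ (max 0 (max T1 T2)) (le_max_left _ _) with h | h
      · exact hT1 (hmonoP (le_trans (le_max_left _ _) (le_max_right _ _)) h)
      · exact hT2 (hmonoQ (le_trans (le_max_right _ _) (le_max_right _ _)) h)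
    have hrev : ∀ (u : ℝ) (a : M), φ.reverse u a = φ (-u) a := fun _ _ => rfl
    rcases hcases with hP | hQ
    · choose y hyN t ht ho using fun n : ℕ => hP (n : ℝ)
      exact key_lemma φ hNc hmax hKWN y hyN t ht
        (fun n hmem => ho n (interior_subset hmem))
    · choose y hyN t ht ho using fun n : ℕ => hQ (n : ℝ)
      refine key_lemma φ.reverse hNc ?_ hKWN y ?_ (fun n => -(t n)) ?_ ?_
      · intro a ha hall
        refine hmax a ha fun u => ?_
        have := hall (-u)
        rwa [hrev, neg_neg] at this
      · intro n u hu
        rw [hrev]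
        exact hyN n (-u) (by linarith)
      · intro n
        have := ht n
        linarith
      · intro n hmem
        rw [hrev, neg_neg] at hmem
        exact ho n (interior_subset hmem)
  -- easy direction
  have easy : (∀ p ∈ K, StronglyInfluenced φ K p) → ¬ Saddle φ K := by
    intro hSI hsad
    obtain ⟨U, hKU, hU⟩ := hsad
    have hpt : ∀ p ∈ K, ∃ (Sp : Set M) (T : ℝ), Sp ∈ 𝓝 p ∧ 0 ≤ T ∧ ∀ x ∈ Sp,
        (∀ t : ℝ, T ≤ t → φ t x ∈ U) ∨ (∀ t : ℝ, t ≤ -T → φ t x ∈ U) := by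
      intro p hp
      obtain ⟨Sp, hSp, hprop⟩ := hSI p hp
      obtain ⟨T, hT0, hT⟩ := hprop U hKU
      exact ⟨Sp, T, hSp, hT0, hT⟩
    choose! Sp Tf hSp hT0 hT using hpt
    have hcover : K ⊆ ⋃ p ∈ K, interior (Sp p) := fun q hq =>
      Set.mem_biUnion hq (mem_interior_iff_mem_nhds.mpr (hSp q hq))
    obtain ⟨F, hFK, hFfin, hFcover⟩ :=
      hKc.elim_finite_subcover_image (fun p _ => isOpen_interior) hcover
    have hbdd : BddAbove (Tf '' F) := (hFfin.image Tf).bddAbove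
    obtain ⟨T', hT'⟩ := hbdd
    set T'' : ℝ := max T' 0 with hT''
    obtain ⟨O, hOopen, hKO, hOtube⟩ := tube_lemma' φ hKc hKinv hKU T''
    set V : Set M := O ∩ ⋃ p ∈ F, interior (Sp p) with hVdef
    have hVopen : IsOpen V := hOopen.inter (isOpen_biUnion fun _ _ => isOpen_interior)
    have hKV : K ⊆ V := fun q hq => ⟨hKO hq, hFcover hq⟩
    obtain ⟨x, hxV, hnp, hnq⟩ := hU V (by rw [hVopen.interior_eq]; exact hKV)
    obtain ⟨hxO, hxU⟩ := hxV
    simp only [Set.mem_iUnion] at hxU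
    obtain ⟨p, hpF, hxSp⟩ := hxU
    have hTp : Tf p ≤ T'' :=
      le_trans (hT' (Set.mem_image_of_mem Tf hpF)) (le_max_left _ _)
    have hT0' : 0 ≤ Tf p := hT0 p (hFK hpF)
    rcases hT p (hFK hpF) x (interior_subset hxSp) with hfor | hback
    · refine hnp ?_
      rintro _ ⟨t, ht0, rfl⟩
      by_cases hc : Tf p ≤ t
      · exact hfor t hc
      · push_neg at hc
        exact hOtube x hxO t (by linarith [le_max_right T' (0:ℝ)]) (by linarith)
    · refine hnq ?_
      rintro _ ⟨t, ht0, rfl⟩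
      by_cases hc : t ≤ -(Tf p)
      · exact hback t hc
      · push_neg at hc
        exact hOtube x hxO t (by linarith) (by linarith [le_max_right T' (0:ℝ)])
  have equiv2 : (∀ p ∈ K, StronglyInfluenced φ K p) ↔
      ∃ U : Set M, K ⊆ interior U ∧ ∀ p ∈ U, StronglyInfluenced φ K p := by
    constructor
    · intro h
      refine ⟨{p | StronglyInfluenced φ K p}, fun q hq => ?_, fun p hp => hp⟩
      obtain ⟨Uq, hUq, hprop⟩ := h q hq
      apply mem_interior_iff_mem_nhds.mpr
      refine Filter.mem_of_superset (interior_mem_nhds.mpr hUq) ?_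
      intro r hr
      exact ⟨Uq, mem_nhds_iff.mpr ⟨interior Uq, interior_subset, isOpen_interior, hr⟩, hprop⟩
    · rintro ⟨U, hKU, hU⟩ p hp
      exact hU p (interior_subset (hKU hp))
  exact ⟨⟨hard, easy⟩,
    ⟨fun h => equiv2.mp (hard h), fun h => easy (equiv2.mpr h)⟩⟩
end

section
/- Let K be an isolated non-saddle compact invariant set. Then the set H(K)∖K of homoclinic points is open in M. -/
open Set Filter Topology

variable {M : Type*}

section AuxLemmas
set_option linter.unusedSectionVars false

variable [TopologicalSpace M] [T2Space M] {φ : Flow ℝ M} {K N : Set M}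

private lemma flow_cont (φ : Flow ℝ M) (r : ℝ) : Continuous fun y : M => φ r y :=
  φ.continuous continuous_const continuous_id

/-- If the forward tail of the orbit of `x` (from time `a` on) lies in a compact isolating
neighborhood `N` of `K`, then `x ∈ A(K)`. -/
private lemma fwd_tail_mem_Aset (hN : IsCompact N)
    (hmax : ∀ z ∈ N, (∀ t : ℝ, φ t z ∈ N) → z ∈ K) {x : M} {a : ℝ}
    (hx : ∀ t : ℝ, a ≤ t → φ t x ∈ N) : x ∈ Aset φ K := by
  set tail : ℝ → Set M := fun t => {y | ∃ s : ℝ, t ≤ s ∧ φ s x = y} with htail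
  have tmono : ∀ {t t' : ℝ}, t ≤ t' → tail t' ⊆ tail t := by
    rintro t t' h _ ⟨s, hs, rfl⟩; exact ⟨s, h.trans hs, rfl⟩
  have tsubN : ∀ t : ℝ, a ≤ t → tail t ⊆ N := by
    rintro t h _ ⟨s, hs, rfl⟩; exact hx s (h.trans hs)
  have homega : omegaLim φ x = ⋂ t ∈ Set.Ioi (0:ℝ), closure (tail t) := rfl
  set b : ℝ := max a 1 with hb
  have hb0 : (0:ℝ) < b := lt_of_lt_of_le one_pos (le_max_right _ _)
  have hba : a ≤ b := le_max_left _ _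
  -- nonemptiness of the omega-limit set
  set C : ℕ → Set M := fun n => closure (tail (b + n)) with hC
  have hCsub : ∀ n, C (n + 1) ⊆ C n := by
    intro n; exact closure_mono (tmono (by push_cast; linarith))
  have hCne : ∀ n, (C n).Nonempty :=
    fun n => ⟨φ (b + n) x, subset_closure ⟨b + n, le_refl _, rfl⟩⟩
  have hCclosed : ∀ n, IsClosed (C n) := fun n => isClosed_closure
  have hCN : ∀ n, C n ⊆ N := by
    intro n
    refine closure_minimal (tsubN _ ?_) hN.isClosed
    have : (0:ℝ) ≤ n := Nat.cast_nonneg n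
    linarith
  have hC0 : IsCompact (C 0) := hN.of_isClosed_subset (hCclosed 0) (hCN 0)
  obtain ⟨z, hz⟩ :=
    IsCompact.nonempty_iInter_of_sequence_nonempty_isCompact_isClosed C hCsub hCne hC0 hCclosed
  have hzo : z ∈ omegaLim φ x := by
    rw [homega, mem_iInter₂]
    intro t ht
    obtain ⟨n, hn⟩ := exists_nat_ge t
    have h1 : z ∈ C n := mem_iInter.1 hz n
    exact closure_mono (tmono (hn.trans (by linarith))) h1
  -- the omega-limit set is contained in N
  have hoN : omegaLim φ x ⊆ N := by
    intro w hw
    have h1 : w ∈ closure (tail b) := by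
      rw [homega, mem_iInter₂] at hw
      exact hw b hb0
    exact closure_minimal (tsubN b hba) hN.isClosed h1
  -- the omega-limit set is invariant
  have hinv : ∀ w ∈ omegaLim φ x, ∀ r : ℝ, φ r w ∈ omegaLim φ x := by
    intro w hw r
    rw [homega, mem_iInter₂]
    intro t ht
    have h1 : w ∈ closure (tail (|t| + |r| + 1)) := by
      rw [homega, mem_iInter₂] at hw
      exact hw _ (mem_Ioi.2 (by positivity))
    have h2 : φ r w ∈ closure ((fun y => φ r y) '' tail (|t| + |r| + 1)) :=
      image_closure_subset_closure_image (flow_cont φ r) ⟨w, h1, rfl⟩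
    refine closure_mono ?_ h2
    rintro _ ⟨_, ⟨q, hq, rfl⟩, rfl⟩
    refine ⟨r + q, ?_, (φ.map_add r q x)⟩
    have h3 : -|r| ≤ r := neg_abs_le r
    have h4 : t ≤ |t| := le_abs_self t
    linarith
  -- each point of the omega-limit set is in K
  have hzK : omegaLim φ x ⊆ K := fun w hw =>
    hmax w (hoN hw) fun t => hoN (hinv w hw t)
  exact ⟨⟨z, hzo⟩, hzK⟩

/-- Backward version: if the backward tail of the orbit of `x` (up to time `a`) lies in a
compact isolating neighborhood `N` of `K`, then `x ∈ R(K)`. -/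
private lemma bwd_tail_mem_Rset (hN : IsCompact N)
    (hmax : ∀ z ∈ N, (∀ t : ℝ, φ t z ∈ N) → z ∈ K) {x : M} {a : ℝ}
    (hx : ∀ t : ℝ, t ≤ a → φ t x ∈ N) : x ∈ Rset φ K := by
  set tail : ℝ → Set M := fun t => {y | ∃ s : ℝ, s ≤ t ∧ φ s x = y} with htail
  have tmono : ∀ {t t' : ℝ}, t' ≤ t → tail t' ⊆ tail t := by
    rintro t t' h _ ⟨s, hs, rfl⟩; exact ⟨s, hs.trans h, rfl⟩
  have tsubN : ∀ t : ℝ, t ≤ a → tail t ⊆ N := by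
    rintro t h _ ⟨s, hs, rfl⟩; exact hx s (hs.trans h)
  have halpha : alphaLim φ x = ⋂ t ∈ Set.Iio (0:ℝ), closure (tail t) := rfl
  set b : ℝ := min a (-1) with hb
  have hb0 : b < (0:ℝ) := lt_of_le_of_lt (min_le_right _ _) (by norm_num)
  have hba : b ≤ a := min_le_left _ _
  set C : ℕ → Set M := fun n => closure (tail (b - n)) with hC
  have hCsub : ∀ n, C (n + 1) ⊆ C n := by
    intro n; exact closure_mono (tmono (by push_cast; linarith))
  have hCne : ∀ n, (C n).Nonempty :=
    fun n => ⟨φ (b - n) x, subset_closure ⟨b - n, le_refl _, rfl⟩⟩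
  have hCclosed : ∀ n, IsClosed (C n) := fun n => isClosed_closure
  have hCN : ∀ n, C n ⊆ N := by
    intro n
    refine closure_minimal (tsubN _ ?_) hN.isClosed
    have : (0:ℝ) ≤ n := Nat.cast_nonneg n
    linarith
  have hC0 : IsCompact (C 0) := hN.of_isClosed_subset (hCclosed 0) (hCN 0)
  obtain ⟨z, hz⟩ :=
    IsCompact.nonempty_iInter_of_sequence_nonempty_isCompact_isClosed C hCsub hCne hC0 hCclosed
  have hzo : z ∈ alphaLim φ x := by
    rw [halpha, mem_iInter₂]
    intro t ht
    obtain ⟨n, hn⟩ := exists_nat_ge (-t)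
    have h1 : z ∈ C n := mem_iInter.1 hz n
    exact closure_mono (tmono (by linarith)) h1
  have hoN : alphaLim φ x ⊆ N := by
    intro w hw
    have h1 : w ∈ closure (tail b) := by
      rw [halpha, mem_iInter₂] at hw
      exact hw b hb0
    exact closure_minimal (tsubN b hba) hN.isClosed h1
  have hinv : ∀ w ∈ alphaLim φ x, ∀ r : ℝ, φ r w ∈ alphaLim φ x := by
    intro w hw r
    rw [halpha, mem_iInter₂]
    intro t ht
    have h1 : w ∈ closure (tail (-(|t| + |r| + 1))) := by
      rw [halpha, mem_iInter₂] at hw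
      refine hw _ (mem_Iio.2 ?_)
      have : (0:ℝ) < |t| + |r| + 1 := by positivity
      linarith
    have h2 : φ r w ∈ closure ((fun y => φ r y) '' tail (-(|t| + |r| + 1))) :=
      image_closure_subset_closure_image (flow_cont φ r) ⟨w, h1, rfl⟩
    refine closure_mono ?_ h2
    rintro _ ⟨_, ⟨q, hq, rfl⟩, rfl⟩
    refine ⟨r + q, ?_, (φ.map_add r q x)⟩
    have h3 : r ≤ |r| := le_abs_self r
    have h4 : -|t| ≤ t := neg_abs_le t
    linarith
  have hzK : alphaLim φ x ⊆ K := fun w hw =>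
    hmax w (hoN hw) fun t => hoN (hinv w hw t)
  exact ⟨⟨z, hzo⟩, hzK⟩

/-- A point of `A(K)` visits every open neighborhood of `K` at arbitrarily large times. -/
private lemma exists_fwd_visit {O : Set M} (hO : IsOpen O) (hKO : K ⊆ O)
    {x : M} (hx : x ∈ Aset φ K) (b : ℝ) : ∃ t : ℝ, b ≤ t ∧ φ t x ∈ O := by
  obtain ⟨⟨k, hk⟩, hsub⟩ := hx
  have hkO : k ∈ O := hKO (hsub hk)
  have h1 : k ∈ closure {y | ∃ s : ℝ, max b 1 ≤ s ∧ φ s x = y} := by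
    rw [omegaLim, mem_iInter₂] at hk
    exact hk _ (mem_Ioi.2 (lt_of_lt_of_le one_pos (le_max_right b 1)))
  obtain ⟨_, hyO, ⟨s, hs, rfl⟩⟩ := (mem_closure_iff.1 h1) O hO hkO
  exact ⟨s, (le_max_left b 1).trans hs, hyO⟩

/-- A point of `R(K)` visits every open neighborhood of `K` at arbitrarily negative times. -/
private lemma exists_bwd_visit {O : Set M} (hO : IsOpen O) (hKO : K ⊆ O)
    {x : M} (hx : x ∈ Rset φ K) (b : ℝ) : ∃ t : ℝ, t ≤ b ∧ φ t x ∈ O := by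
  obtain ⟨⟨k, hk⟩, hsub⟩ := hx
  have hkO : k ∈ O := hKO (hsub hk)
  have h1 : k ∈ closure {y | ∃ s : ℝ, s ≤ min b (-1) ∧ φ s x = y} := by
    rw [alphaLim, mem_iInter₂] at hk
    exact hk _ (mem_Iio.2 (lt_of_le_of_lt (min_le_right b (-1)) (by norm_num)))
  obtain ⟨_, hyO, ⟨s, hs, rfl⟩⟩ := (mem_closure_iff.1 h1) O hO hkO
  exact ⟨s, hs.trans (min_le_left b (-1)), hyO⟩

private lemma flow_shift (φ : Flow ℝ M) (t r : ℝ) (x : M) :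
    φ (t - r) (φ r x) = φ t x := by
  rw [← φ.map_add, sub_add_cancel]

end AuxLemmas

/-- the set of homoclinic points `H(K)∖K` of an isolated non-saddle
compactum is open. -/
theorem stmt8 {M : Type*} [MetricSpace M] [LocallyCompactSpace M]
    (φ : Flow ℝ M) (K : Set M)
    (hIso : IsIsolatedInv φ K) (hNS : NonSaddle φ K) :
    IsOpen (Hset φ K \ K) := by
  obtain ⟨hKc, hKinv, N, hNc, hKN, hmax⟩ := hIso
  -- apply non-saddleness twice
  obtain ⟨V, hKV, hVN, hVdich⟩ := hNS (interior N) (by rwa [interior_interior])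
  obtain ⟨V', hKV', hV'V, hV'dich⟩ := hNS (interior V) (by rwa [interior_interior])
  rw [isOpen_iff_forall_mem_open]
  rintro x ⟨hxH, hxK⟩
  obtain ⟨hxA, hxR⟩ := hxH
  have hxnotall : ¬ ∀ t : ℝ, φ t x ∈ N := by
    intro h
    exact hxK (hmax x (by simpa [φ.map_zero_apply] using h 0) h)
  -- dichotomy for points of the orbit of any point lying in V
  have hdich : ∀ (y : M) (r : ℝ), φ r y ∈ V →
      (∀ t : ℝ, r ≤ t → φ t y ∈ interior N) ∨ (∀ t : ℝ, t ≤ r → φ t y ∈ interior N) := by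
    intro y r hr
    rcases hVdich _ hr with h | h
    · left; intro t ht
      exact h ⟨t - r, by linarith, flow_shift φ t r y⟩
    · right; intro t ht
      exact h ⟨t - r, by linarith, flow_shift φ t r y⟩
  have hV'subV : ∀ {z : M}, z ∈ interior V' → z ∈ V :=
    fun hz => interior_subset (hV'V (interior_subset hz))
  -- choose a time s with φ s x ∈ int V' and forward orbit from s inside int N
  obtain ⟨s, hsV', hsP⟩ :
      ∃ s : ℝ, φ s x ∈ interior V' ∧ ∀ t : ℝ, s ≤ t → φ t x ∈ interior N := by
    by_contra hcon
    push_neg at hcon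
    apply hxnotall
    intro t
    obtain ⟨r, htr, hrV'⟩ := exists_fwd_visit isOpen_interior hKV' hxA t
    rcases hdich x r (hV'subV hrV') with h | h
    · obtain ⟨t', ht', ht'N⟩ := hcon r hrV'
      exact absurd (h t' ht') ht'N
    · exact interior_subset (h t htr)
  -- choose a time u with φ u x ∈ int V' and backward orbit up to u inside int N
  obtain ⟨u, huV', huP⟩ :
      ∃ u : ℝ, φ u x ∈ interior V' ∧ ∀ t : ℝ, t ≤ u → φ t x ∈ interior N := by
    by_contra hcon
    push_neg at hcon
    apply hxnotall
    intro t
    obtain ⟨r, htr, hrV'⟩ := exists_bwd_visit isOpen_interior hKV' hxR t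
    rcases hdich x r (hV'subV hrV') with h | h
    · exact interior_subset (h t htr)
    · obtain ⟨t', ht', ht'N⟩ := hcon r hrV'
      exact absurd (h t' ht') ht'N
  -- a time where the orbit of x is outside N
  obtain ⟨t0, ht0⟩ : ∃ t : ℝ, φ t x ∉ N := by
    by_contra h; push_neg at h; exact hxnotall h
  have hut0 : u ≤ t0 := by
    by_contra h; push_neg at h
    exact ht0 (interior_subset (huP t0 h.le))
  have ht0s : t0 ≤ s := by
    by_contra h; push_neg at h
    exact ht0 (interior_subset (hsP t0 h.le))
  have hiVN : interior V ⊆ interior N := interior_subset.trans hVN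
  -- the open neighborhood of x
  refine ⟨((fun y => φ s y) ⁻¹' interior V') ∩ ((fun y => φ u y) ⁻¹' interior V') ∩
      (((fun y => φ t0 y) ⁻¹' N)ᶜ ∩ Kᶜ), ?_, ?_, ⟨⟨hsV', huV'⟩, ht0, hxK⟩⟩
  · -- subset of Hset \ K
    rintro y ⟨⟨hys, hyu⟩, hyt0, hyK⟩
    refine ⟨?_, hyK⟩
    -- helper: membership in Aset / Rset from semiorbit containments
    have hA : ∀ {r : ℝ}, posOrbit φ (φ r y) ⊆ interior N → y ∈ Aset φ K := by
      intro r h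
      refine fwd_tail_mem_Aset hNc hmax (a := r) fun t ht => ?_
      exact interior_subset (h ⟨t - r, by linarith, flow_shift φ t r y⟩)
    have hR : ∀ {r : ℝ}, negOrbit φ (φ r y) ⊆ interior N → y ∈ Rset φ K := by
      intro r h
      refine bwd_tail_mem_Rset hNc hmax (a := r) fun t ht => ?_
      exact interior_subset (h ⟨t - r, by linarith, flow_shift φ t r y⟩)
    rcases hVdich (φ s y) (hV'subV hys) with Ha | Hb
    · -- y is attracted; use the V'-dichotomy at time u
      rcases hV'dich (φ u y) (interior_subset hyu) with Hp | Hq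
      · -- forward orbit from u lies in int V ⊆ N : contradicts φ t0 y ∉ N
        exact absurd (interior_subset (hVN (interior_subset
          (Hp ⟨t0 - u, by linarith, flow_shift φ t0 u y⟩)))) hyt0
      · -- backward orbit from u lies in int V ⊆ int N : y ∈ Rset
        exact ⟨hA Ha, hR fun z hz => hiVN (Hq hz)⟩
    · -- y is repelled; use the V'-dichotomy at time s
      rcases hV'dich (φ s y) (interior_subset hys) with Hp | Hq
      · exact ⟨hA fun z hz => hiVN (Hp hz), hR Hb⟩
      · exact absurd (interior_subset (hVN (interior_subset
          (Hq ⟨t0 - s, by linarith, flow_shift φ t0 s y⟩)))) hyt0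
  · -- openness
    have h1 : Continuous fun y : M => φ s y := flow_cont φ s
    have h2 : Continuous fun y : M => φ u y := flow_cont φ u
    have h3 : Continuous fun y : M => φ t0 y := flow_cont φ t0
    exact (((isOpen_interior.preimage h1).inter (isOpen_interior.preimage h2)).inter
      ((hNc.isClosed.preimage h3).isOpen_compl.inter hKc.isClosed.isOpen_compl))
end

section
/- Let K be an isolated non-saddle compact invariant set. Then A*(K) ∪ K and R*(K) ∪ K are closed subsets of the region of influence I(K), where A*(K) = A(K)∖R(K) and R*(K) = R(K)∖A(K). -/
open Set Filter Topology

variable {M : Type*}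

section Auxiliary

variable {M : Type*} [MetricSpace M]


lemma tendsto_const_sub_natCast (c : ℝ) : Tendsto (fun n : ℕ => c - (n : ℝ)) atTop atBot := by
  have h1 : Tendsto (fun n : ℕ => -(n : ℝ)) atTop atBot :=
    tendsto_neg_atBot_iff.mpr tendsto_natCast_atTop_atTop
  simpa [sub_eq_add_neg] using tendsto_atBot_add_const_left atTop c h1

lemma mem_alphaLim_of_seq (φ : Flow ℝ M) {x q : M} {ts : ℕ → ℝ}
    (hts : Tendsto ts atTop atBot)
    (hq : Tendsto (fun n => φ (ts n) x) atTop (𝓝 q)) : q ∈ alphaLim φ x := by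
  simp only [alphaLim, mem_iInter, mem_Iio]
  intro t ht
  refine mem_closure_of_tendsto hq ?_
  filter_upwards [hts.eventually_le_atBot t] with n hn
  exact ⟨ts n, hn, rfl⟩

lemma alphaLim_inv (φ : Flow ℝ M) (x : M) (r : ℝ) {p : M} (hp : p ∈ alphaLim φ x) :
    φ r p ∈ alphaLim φ x := by
  simp only [alphaLim, mem_iInter, mem_Iio] at hp ⊢
  intro t ht
  have ht' : min (t - r) (-1) < 0 := lt_of_le_of_lt (min_le_right _ _) (by norm_num)
  have h1 := hp _ ht'
  have hc : Continuous (φ r) := φ.continuous_toFun r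
  have h2 : φ r p ∈ closure (φ r '' {y | ∃ s, s ≤ min (t - r) (-1) ∧ φ s x = y}) :=
    image_closure_subset_closure_image hc ⟨p, h1, rfl⟩
  refine closure_mono ?_ h2
  rintro _ ⟨y, ⟨s, hs, rfl⟩, rfl⟩
  refine ⟨r + s, ?_, φ.map_add r s x⟩
  have := le_trans hs (min_le_left _ _)
  linarith

lemma exists_frontier_crossing (φ : Flow ℝ M) (x : M) {N : Set M} (hNc : IsClosed N)
    {a b : ℝ} (ha : φ a x ∈ interior N) (hb : φ b x ∉ N) :
    ∃ r ∈ Icc (min a b) (max a b), φ r x ∈ frontier N := by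
  by_contra h
  push_neg at h
  set f : ℝ → M := fun t => φ t x with hf
  have hfc : Continuous f := φ.continuous continuous_id continuous_const
  have hpc : IsPreconnected (Icc (min a b) (max a b) : Set ℝ) := isPreconnected_Icc
  have hcov : Icc (min a b) (max a b) ⊆ f ⁻¹' (interior N) ∪ f ⁻¹' Nᶜ := by
    intro t htI
    by_cases hN : f t ∈ N
    · left
      have hfr : f t ∉ frontier N := h t htI
      rw [hNc.frontier_eq] at hfr
      simpa [hN] using hfr
    · exact Or.inr hN
  have haI : a ∈ Icc (min a b) (max a b) := ⟨min_le_left _ _, le_max_left _ _⟩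
  have hbI : b ∈ Icc (min a b) (max a b) := ⟨min_le_right _ _, le_max_right _ _⟩
  obtain ⟨t, _, htu, htv⟩ := hpc _ _ (isOpen_interior.preimage hfc)
    (hNc.isOpen_compl.preimage hfc) hcov ⟨a, haI, ha⟩ ⟨b, hbI, hb⟩
  exact htv (interior_subset htu)

/-- If `x ∈ R(K)` and `N` is a compact neighborhood of `K`, then the negative tail of
the orbit of `x` eventually lies in `N`. -/
lemma tail_in_N (φ : Flow ℝ M) {K N : Set M} {x : M}
    (hNcomp : IsCompact N) (hKN : K ⊆ interior N) (hx : x ∈ Rset φ K) :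
    ∃ s₀ : ℝ, 0 ≤ s₀ ∧ ∀ t ≤ -s₀, φ t x ∈ N := by
  by_contra h
  push_neg at h
  obtain ⟨⟨p, hp⟩, hsub⟩ := hx
  have hpN : p ∈ interior N := hKN (hsub hp)
  have hin : ∀ n : ℕ, ∃ s ≤ -(n + 1 : ℝ), φ s x ∈ interior N := by
    intro n
    have hlt : (-(n + 1 : ℝ)) < 0 := by
      have : (0:ℝ) ≤ n := Nat.cast_nonneg n
      linarith
    have h1 : p ∈ closure {y | ∃ s, s ≤ -(n + 1 : ℝ) ∧ φ s x = y} := by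
      simp only [alphaLim, mem_iInter, mem_Iio] at hp
      exact hp _ hlt
    rcases mem_closure_iff.mp h1 (interior N) isOpen_interior hpN with ⟨y, hy1, s, hs, rfl⟩
    exact ⟨s, hs, hy1⟩
  have hout : ∀ n : ℕ, ∃ t ≤ -(n + 1 : ℝ), φ t x ∉ N := by
    intro n
    obtain ⟨t, ht1, ht2⟩ := h (n + 1 : ℝ) (by
      have : (0:ℝ) ≤ n := Nat.cast_nonneg n
      linarith)
    exact ⟨t, ht1, ht2⟩
  choose s hs1 hs2 using hin
  choose t' ht1 ht2 using hout
  have hcr : ∀ n : ℕ, ∃ r ≤ -(n + 1 : ℝ), φ r x ∈ frontier N := by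
    intro n
    obtain ⟨r, hrI, hrf⟩ := exists_frontier_crossing φ x hNcomp.isClosed (hs2 n) (ht2 n)
    exact ⟨r, hrI.2.trans (max_le (hs1 n) (ht1 n)), hrf⟩
  choose r hr1 hr2 using hcr
  have hfrc : IsCompact (frontier N) :=
    hNcomp.of_isClosed_subset isClosed_frontier
      (frontier_subset_closure.trans hNcomp.isClosed.closure_eq.subset)
  obtain ⟨q, hqF, σ, hσ, hq⟩ := hfrc.tendsto_subseq hr2
  have hrb : Tendsto (fun n => r (σ n)) atTop atBot := by
    refine tendsto_atBot_mono (fun n => (hr1 (σ n)).trans ?_) (tendsto_const_sub_natCast 0)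
    have : (n : ℝ) ≤ (σ n : ℝ) := by exact_mod_cast hσ.le_apply
    linarith
  have hqα := mem_alphaLim_of_seq φ hrb hq
  have hqint : q ∈ interior N := hKN (hsub hqα)
  rw [hNcomp.isClosed.frontier_eq] at hqF
  exact hqF.2 hqint

/-- If `x ∈ R(K)` then the negative tail of the orbit eventually lies in any open
set containing `K`, provided `K` has a compact neighborhood `N`. -/
lemma tail_in_W (φ : Flow ℝ M) {K N W : Set M} {x : M}
    (hNcomp : IsCompact N) (hKN : K ⊆ interior N)
    (hW : IsOpen W) (hKW : K ⊆ W) (hx : x ∈ Rset φ K) :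
    ∃ s₀ : ℝ, 0 ≤ s₀ ∧ ∀ t ≤ -s₀, φ t x ∈ W := by
  obtain ⟨s₀, hs₀, hN⟩ := tail_in_N φ hNcomp hKN hx
  by_contra h
  push_neg at h
  obtain ⟨⟨p, hp⟩, hsub⟩ := hx
  have hout : ∀ n : ℕ, ∃ t ≤ -(s₀ + n), φ t x ∈ N \ W := by
    intro n
    obtain ⟨t, ht1, ht2⟩ := h (s₀ + n) (by
      have : (0:ℝ) ≤ n := Nat.cast_nonneg n
      linarith)
    exact ⟨t, ht1, hN t (ht1.trans (by
      have : (0:ℝ) ≤ n := Nat.cast_nonneg n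
      linarith)), ht2⟩
  choose t ht1 ht2 using hout
  have hcomp : IsCompact (N \ W) :=
    hNcomp.of_isClosed_subset (hNcomp.isClosed.sdiff hW) diff_subset
  obtain ⟨q, hqF, σ, hσ, hq⟩ := hcomp.tendsto_subseq ht2
  have hrb : Tendsto (fun n => t (σ n)) atTop atBot := by
    refine tendsto_atBot_mono (fun n => (ht1 (σ n)).trans ?_) (tendsto_const_sub_natCast 0)
    have h1 : (n : ℝ) ≤ (σ n : ℝ) := by exact_mod_cast hσ.le_apply
    linarith
  have hqα := mem_alphaLim_of_seq φ hrb hq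
  exact hqF.2 (hKW (hsub hqα))

/-- If the negative tail of the orbit of `x` lies in the isolating neighborhood `N`,
then `x ∈ R(K)`. -/
lemma mem_Rset_of_tail (φ : Flow ℝ M) {K N : Set M} {x : M} {c : ℝ}
    (hNcomp : IsCompact N) (hNmax : ∀ y ∈ N, (∀ t : ℝ, φ t y ∈ N) → y ∈ K)
    (htail : ∀ t ≤ c, φ t x ∈ N) : x ∈ Rset φ K := by
  have hmem : ∀ n : ℕ, φ (c - n) x ∈ N := fun n => htail _ (by
    have : (0:ℝ) ≤ n := Nat.cast_nonneg n
    linarith)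
  obtain ⟨q, hqN, σ, hσ, hq⟩ := hNcomp.tendsto_subseq hmem
  have hts : Tendsto (fun n => c - (σ n : ℝ)) atTop atBot := by
    refine tendsto_atBot_mono (fun n => ?_) (tendsto_const_sub_natCast c)
    have : (n : ℝ) ≤ (σ n : ℝ) := by exact_mod_cast hσ.le_apply
    linarith
  have hqα := mem_alphaLim_of_seq φ hts hq
  have hαN : alphaLim φ x ⊆ N := by
    intro p hp
    have hlt : min c (-1) < 0 := lt_of_le_of_lt (min_le_right _ _) (by norm_num)
    have hp' : p ∈ closure {y | ∃ s, s ≤ min c (-1) ∧ φ s x = y} := by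
      simp only [alphaLim, mem_iInter, mem_Iio] at hp
      exact hp _ hlt
    have hcl : closure {y | ∃ s, s ≤ min c (-1) ∧ φ s x = y} ⊆ N := by
      rw [← hNcomp.isClosed.closure_eq]
      apply closure_mono
      rintro y ⟨s, hs, rfl⟩
      exact htail s (hs.trans (min_le_left _ _))
    exact hcl hp'
  have hαK : alphaLim φ x ⊆ K := fun p hp =>
    hNmax p (hαN hp) fun t => hαN (alphaLim_inv φ x t hp)
  exact ⟨⟨q, hqα⟩, hαK⟩

end Auxiliary

section Main

variable {M : Type*} [MetricSpace M]

/-- Key one-sided lemma: `A*(K) ∪ K` is closed in `I(K)`. -/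
lemma key_closed (φ : Flow ℝ M) (K : Set M)
    (hIso : IsIsolatedInv φ K) (hNS : NonSaddle φ K) :
    closure ((Aset φ K \ Rset φ K) ∪ K) ∩ Iset φ K ⊆ (Aset φ K \ Rset φ K) ∪ K := by
  obtain ⟨hKcomp, hKinv, N, hNcomp, hKN, hNmax⟩ := hIso
  obtain ⟨V, hKV, hVN, hdich⟩ := hNS N hKN
  rintro x ⟨hxcl, hxI⟩
  by_contra hx
  have hxK : x ∉ K := fun h => hx (Or.inr h)
  have hxR : x ∈ Rset φ K := by
    rcases hxI with h | h
    · by_cases hr : x ∈ Rset φ K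
      · exact hr
      · exact absurd (Or.inl ⟨h, hr⟩) hx
    · exact h
  have hxclA : x ∈ closure (Aset φ K \ Rset φ K) := by
    rw [closure_union, hKcomp.isClosed.closure_eq] at hxcl
    rcases hxcl with h | h
    · exact h
    · exact absurd h hxK
  obtain ⟨s₀, hs₀, htail⟩ := tail_in_W φ hNcomp hKN isOpen_interior hKV hxR
  -- htail : ∀ t ≤ -s₀, φ t x ∈ interior V
  set O : Set M := (fun z => φ (-s₀) z) ⁻¹' interior V with hO
  have hOopen : IsOpen O := isOpen_interior.preimage (φ.continuous_toFun _)
  have hxO : x ∈ O := htail _ le_rfl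
  set F : Set M := {z | ∀ t : ℝ, -s₀ ≤ t → φ t z ∈ N} with hF
  have hkey : (Aset φ K \ Rset φ K) ∩ O ⊆ F := by
    rintro z ⟨⟨hzA, hzR⟩, hzO⟩ t ht
    have hzV : φ (-s₀) z ∈ V := interior_subset hzO
    have hcomp : ∀ s : ℝ, φ s (φ (-s₀) z) = φ (s - s₀) z := by
      intro s; rw [← φ.map_add]; ring_nf
    rcases hdich _ hzV with hpos | hneg
    · have := hpos ⟨t + s₀, by linarith, rfl⟩
      rwa [hcomp, add_sub_cancel_right] at this
    · exfalso
      apply hzR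
      refine mem_Rset_of_tail φ hNcomp hNmax (c := -s₀) ?_
      intro t' ht'
      have := hneg ⟨t' + s₀, by linarith, rfl⟩
      rwa [hcomp, add_sub_cancel_right] at this
  have hFclosed : IsClosed F := by
    have : F = ⋂ t ∈ Ici (-s₀), (fun z => φ t z) ⁻¹' N := by
      ext z; simp [hF, mem_iInter]
    rw [this]
    exact isClosed_biInter fun t _ => hNcomp.isClosed.preimage (φ.continuous_toFun t)
  have hxF : x ∈ F := by
    have h1 : x ∈ closure ((Aset φ K \ Rset φ K) ∩ O) := by
      have h2 : O ∩ closure (Aset φ K \ Rset φ K) ⊆ closure (O ∩ (Aset φ K \ Rset φ K)) :=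
        hOopen.inter_closure
      have := h2 ⟨hxO, hxclA⟩
      rwa [inter_comm] at this
    exact hFclosed.closure_subset_iff.mpr hkey h1
  have hxN : ∀ t : ℝ, φ t x ∈ N := by
    intro t
    rcases le_total t (-s₀) with h | h
    · exact hVN (interior_subset (htail t h))
    · exact hxF t h
  have hxmem : x ∈ N := by
    have := hxN 0
    rwa [φ.map_zero_apply] at this
  exact hxK (hNmax x hxmem hxN)

lemma reverse_apply (φ : Flow ℝ M) (t : ℝ) (x : M) : φ.reverse t x = φ (-t) x := rfl

lemma omegaLim_reverse (φ : Flow ℝ M) (x : M) : omegaLim φ.reverse x = alphaLim φ x := by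
  have hset : ∀ t : ℝ, {y | ∃ s, t ≤ s ∧ φ.reverse s x = y} = {y | ∃ s, s ≤ -t ∧ φ s x = y} := by
    intro t; ext y; constructor
    · rintro ⟨s, hs, rfl⟩; exact ⟨-s, by linarith, rfl⟩
    · rintro ⟨s, hs, rfl⟩
      exact ⟨-s, by linarith, by rw [reverse_apply, neg_neg]⟩
  ext q
  simp only [omegaLim, alphaLim, mem_iInter, mem_Ioi, mem_Iio]
  constructor
  · intro h t ht
    have := h (-t) (by linarith)
    rwa [hset, neg_neg] at this
  · intro h t ht
    rw [hset]
    exact h (-t) (by linarith)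

lemma alphaLim_reverse (φ : Flow ℝ M) (x : M) : alphaLim φ.reverse x = omegaLim φ x := by
  have hset : ∀ t : ℝ, {y | ∃ s, s ≤ t ∧ φ.reverse s x = y} = {y | ∃ s, -t ≤ s ∧ φ s x = y} := by
    intro t; ext y; constructor
    · rintro ⟨s, hs, rfl⟩; exact ⟨-s, by linarith, rfl⟩
    · rintro ⟨s, hs, rfl⟩
      exact ⟨-s, by linarith, by rw [reverse_apply, neg_neg]⟩
  ext q
  simp only [omegaLim, alphaLim, mem_iInter, mem_Ioi, mem_Iio]
  constructor
  · intro h t ht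
    have := h (-t) (by linarith)
    rwa [hset, neg_neg] at this
  · intro h t ht
    rw [hset]
    exact h (-t) (by linarith)

lemma Aset_reverse (φ : Flow ℝ M) (K : Set M) : Aset φ.reverse K = Rset φ K := by
  ext x; simp only [Aset, Rset, mem_setOf_eq, omegaLim_reverse]

lemma Rset_reverse (φ : Flow ℝ M) (K : Set M) : Rset φ.reverse K = Aset φ K := by
  ext x; simp only [Aset, Rset, mem_setOf_eq, alphaLim_reverse]

lemma Iset_reverse (φ : Flow ℝ M) (K : Set M) : Iset φ.reverse K = Iset φ K := by
  rw [Iset, Iset, Aset_reverse, Rset_reverse, union_comm]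

lemma posOrbit_reverse (φ : Flow ℝ M) (x : M) : posOrbit φ.reverse x = negOrbit φ x := by
  ext y; constructor
  · rintro ⟨t, ht, rfl⟩; exact ⟨-t, by linarith, rfl⟩
  · rintro ⟨t, ht, rfl⟩; exact ⟨-t, by linarith, by rw [reverse_apply, neg_neg]⟩

lemma negOrbit_reverse (φ : Flow ℝ M) (x : M) : negOrbit φ.reverse x = posOrbit φ x := by
  ext y; constructor
  · rintro ⟨t, ht, rfl⟩; exact ⟨-t, by linarith, rfl⟩
  · rintro ⟨t, ht, rfl⟩; exact ⟨-t, by linarith, by rw [reverse_apply, neg_neg]⟩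

lemma isIsolatedInv_reverse (φ : Flow ℝ M) (K : Set M) (h : IsIsolatedInv φ K) :
    IsIsolatedInv φ.reverse K := by
  obtain ⟨h1, h2, N, hN1, hN2, hN3⟩ := h
  refine ⟨h1, fun x hx t => h2 x hx (-t), N, hN1, hN2, fun x hx hall => hN3 x hx fun t => ?_⟩
  have := hall (-t)
  rwa [reverse_apply, neg_neg] at this

lemma nonSaddle_reverse (φ : Flow ℝ M) (K : Set M) (h : NonSaddle φ K) :
    NonSaddle φ.reverse K := by
  intro U hU
  obtain ⟨V, hV1, hV2, hV3⟩ := h U hU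
  refine ⟨V, hV1, hV2, fun x hx => ?_⟩
  rw [posOrbit_reverse, negOrbit_reverse]
  exact (hV3 x hx).symm

end Main

/-- `A*(K) ∪ K` and `R*(K) ∪ K` are closed in `I(K)`. -/
theorem stmt9 {M : Type*} [MetricSpace M] [LocallyCompactSpace M]
    (φ : Flow ℝ M) (K : Set M)
    (hIso : IsIsolatedInv φ K) (hNS : NonSaddle φ K) :
    closure ((Aset φ K \ Rset φ K) ∪ K) ∩ Iset φ K ⊆ (Aset φ K \ Rset φ K) ∪ K ∧
    closure ((Rset φ K \ Aset φ K) ∪ K) ∩ Iset φ K ⊆ (Rset φ K \ Aset φ K) ∪ K := by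
  refine ⟨key_closed φ K hIso hNS, ?_⟩
  have h2 := key_closed φ.reverse K (isIsolatedInv_reverse φ K hIso) (nonSaddle_reverse φ K hNS)
  rwa [Aset_reverse, Rset_reverse, Iset_reverse] at h2
end

section
/- Let K be an isolated non-saddle compact invariant set of a flow on a compact metric space M, and x ∈ M∖K. If J*(x) ≠ ∅ and J*(x) ⊆ K × K, then x ∈ H(K) = A(K) ∩ R(K). -/
open Set Filter Topology

variable {M : Type*}

lemma omegaLim_nonempty {M : Type*} [MetricSpace M] [CompactSpace M]
    (φ : Flow ℝ M) (x : M) : (omegaLim φ x).Nonempty := by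
  have : Nonempty (Set.Ioi (0:ℝ)) := ⟨⟨1, by norm_num⟩⟩
  rw [omegaLim, Set.biInter_eq_iInter]
  refine IsCompact.nonempty_iInter_of_directed_nonempty_isCompact_isClosed
    (fun t : Set.Ioi (0:ℝ) => closure {y | ∃ s : ℝ, (t:ℝ) ≤ s ∧ φ s x = y})
    ?_ (fun t => ⟨φ t x, subset_closure ⟨t, le_refl _, rfl⟩⟩)
    (fun t => isClosed_closure.isCompact) (fun t => isClosed_closure)
  intro a b
  rcases le_total (a:ℝ) (b:ℝ) with h | h
  · exact ⟨b, closure_mono (fun y ⟨s, hs, hy⟩ => ⟨s, h.trans hs, hy⟩), subset_rfl⟩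
  · exact ⟨a, subset_rfl, closure_mono (fun y ⟨s, hs, hy⟩ => ⟨s, h.trans hs, hy⟩)⟩

lemma alphaLim_nonempty {M : Type*} [MetricSpace M] [CompactSpace M]
    (φ : Flow ℝ M) (x : M) : (alphaLim φ x).Nonempty := by
  have : Nonempty (Set.Iio (0:ℝ)) := ⟨⟨-1, by norm_num⟩⟩
  rw [alphaLim, Set.biInter_eq_iInter]
  refine IsCompact.nonempty_iInter_of_directed_nonempty_isCompact_isClosed
    (fun t : Set.Iio (0:ℝ) => closure {y | ∃ s : ℝ, s ≤ (t:ℝ) ∧ φ s x = y})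
    ?_ (fun t => ⟨φ t x, subset_closure ⟨t, le_refl _, rfl⟩⟩)
    (fun t => isClosed_closure.isCompact) (fun t => isClosed_closure)
  intro a b
  rcases le_total (a:ℝ) (b:ℝ) with h | h
  · exact ⟨a, subset_rfl, closure_mono (fun y ⟨s, hs, hy⟩ => ⟨s, hs.trans h, hy⟩)⟩
  · exact ⟨b, closure_mono (fun y ⟨s, hs, hy⟩ => ⟨s, hs.trans h, hy⟩), subset_rfl⟩

lemma mem_Jstar_of_limits {M : Type*} [MetricSpace M]
    (φ : Flow ℝ M) (x p q : M) (hp : p ∈ omegaLim φ x) (hq : q ∈ alphaLim φ x) :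
    (p, q) ∈ Jstar φ x := by
  have Hp : ∀ n : ℕ, ∃ s : ℝ, ((n:ℝ)+1 ≤ s) ∧ dist p (φ s x) < 1/((n:ℝ)+1) := by
    intro n
    have h1 : p ∈ closure {y | ∃ s : ℝ, ((n:ℝ)+1) ≤ s ∧ φ s x = y} :=
      Set.mem_iInter₂.1 hp ((n:ℝ)+1) (Set.mem_Ioi.2 (by positivity))
    rcases Metric.mem_closure_iff.1 h1 (1/((n:ℝ)+1)) (by positivity) with ⟨b, ⟨s, hs, rfl⟩, hd⟩
    exact ⟨s, hs, hd⟩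
  have Hq : ∀ n : ℕ, ∃ s : ℝ, (s ≤ -((n:ℝ)+1)) ∧ dist q (φ s x) < 1/((n:ℝ)+1) := by
    intro n
    have h1 : q ∈ closure {y | ∃ s : ℝ, s ≤ -((n:ℝ)+1) ∧ φ s x = y} :=
      Set.mem_iInter₂.1 hq (-((n:ℝ)+1)) (Set.mem_Iio.2 (by nlinarith [Nat.cast_nonneg (α := ℝ) n]))
    rcases Metric.mem_closure_iff.1 h1 (1/((n:ℝ)+1)) (by positivity) with ⟨b, ⟨s, hs, rfl⟩, hd⟩
    exact ⟨s, hs, hd⟩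
  choose ts hts hdts using Hp
  choose ss hss hdss using Hq
  refine ⟨fun _ => x, ts, ss, tendsto_const_nhds, ?_, ?_, ?_, ?_⟩
  · exact tendsto_atTop_mono hts
      (tendsto_atTop_add_const_right _ 1 tendsto_natCast_atTop_atTop)
  · refine tendsto_atBot_mono hss ?_
    have : Tendsto (fun n : ℕ => ((n:ℝ)+1)) atTop atTop :=
      tendsto_atTop_add_const_right _ 1 tendsto_natCast_atTop_atTop
    exact tendsto_neg_atBot_iff.2 this
  · rw [tendsto_iff_dist_tendsto_zero]
    refine squeeze_zero (fun n => dist_nonneg) (fun n => ?_) tendsto_one_div_add_atTop_nhds_zero_nat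
    rw [dist_comm]; exact (hdts n).le
  · rw [tendsto_iff_dist_tendsto_zero]
    refine squeeze_zero (fun n => dist_nonneg) (fun n => ?_) tendsto_one_div_add_atTop_nhds_zero_nat
    rw [dist_comm]; exact (hdss n).le

/-- on a compact space, if `x ∉ K`, `J*(x) ≠ ∅` and `J*(x) ⊆ K × K`,
then `x ∈ H(K)`. -/
theorem stmt11 {M : Type*} [MetricSpace M] [CompactSpace M]
    (φ : Flow ℝ M) (K : Set M)
    (hIso : IsIsolatedInv φ K) (hNS : NonSaddle φ K) (x : M) (hx : x ∉ K)
    (hne : (Jstar φ x).Nonempty) (hsub : Jstar φ x ⊆ K ×ˢ K) :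
    x ∈ Hset φ K := by
  obtain ⟨p, hp⟩ := omegaLim_nonempty φ x
  obtain ⟨q, hq⟩ := alphaLim_nonempty φ x
  refine ⟨⟨⟨p, hp⟩, fun p' hp' => ?_⟩, ⟨q, hq⟩, fun q' hq' => ?_⟩
  · exact (hsub (mem_Jstar_of_limits φ x p' q hp' hq)).1
  · exact (hsub (mem_Jstar_of_limits φ x p q' hp hq')).2
end
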